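/- arXiv:2105.05797 — 9 statements merged into one kernel-verified Lean document; each statement's English description precedes it below -/
import Mathlib

section
/- Let n ≥ 2 and k be integers with k ≥ n + 2. Then every nonempty k-regular induced subgraph of the n-dimensional grid has girth exactly 4. -/
/-- The `n`-dimensional grid: the unit-distance graph on `ℤ^n`. Two points are adjacent
iff they differ by exactly 1 in one coordinate and agree in all others, i.e. iff the sum
of the absolute coordinate differences is 1. -/
def grid (n : ℕ) : SimpleGraph (Fin n → ℤ) where
  Adj x y := ∑ i, |x i - y i| = 1
  symm := ⟨fun x y h => by
    rwa [Finset.sum_congr rfl fun i _ => abs_sub_comm (y i) (x i)]⟩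
  loopless := ⟨fun x h => by simp at h⟩

/-- The induced subgraph of the `n`-dimensional grid on `S` is `k`-regular:
every vertex has exactly `k` neighbours. -/
def IsRegularInduced (n : ℕ) (S : Set (Fin n → ℤ)) (k : ℕ) : Prop :=
  ∀ v : S, (((grid n).induce S).neighborSet v).ncard = k

/-!
The parity of the coordinate sum properly 2-colours the grid, so all its cycles, and those of
any induced subgraph, are even and hence of length at least 4.

For a 4-cycle, take `x ∈ S` and a neighbour `y = x ± eᵢ` in `S`. Each of `x` and `y` has `k ≥ n + 2`
of the `2n` unit steps leading into `S`, so at least `2k - 2n ≥ 4` steps lead into `S` from both.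
Only two of them are parallel to `eᵢ`, so some `±eⱼ` with `j ≠ i` does, and
`x, y, y ± eⱼ, x ± eⱼ` is a 4-cycle in `S`.
-/

open Finset

namespace SimpleGraph

variable {V : Type*} {G : SimpleGraph V}

lemma four_le_egirth_of_coloring (c : G.Coloring Bool) : 4 ≤ G.egirth := by
  refine le_egirth.2 fun a w hw => ?_
  obtain ⟨m, hm⟩ : Even w.length := (c.even_length_iff_congr w).2 Iff.rfl
  have := hw.three_le_length
  exact_mod_cast (show 4 ≤ w.length by omega)

lemma egirth_le_four_of_adj {a b c d : V} (hab : G.Adj a b) (hbc : G.Adj b c) (hcd : G.Adj c d)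
    (hda : G.Adj d a) (hac : a ≠ c) (hbd : b ≠ d) : G.egirth ≤ 4 := by
  let w : G.Walk a a := .cons hab <| .cons hbc <| .cons hcd <| .cons hda .nil
  have hw : w.IsCycle := by
    have := hab.ne; have := hbc.ne; have := hcd.ne; have := hda.ne
    refine (Walk.cons_isCycle_iff _ _).2 ⟨?_, ?_⟩ <;> aesop
  exact egirth_le_length hw

end SimpleGraph

lemma Finset.exists_mem_inter_fst_ne {ι κ : Type*} [Fintype ι] [Fintype κ] [DecidableEq ι]
    [DecidableEq κ] (i : ι) {A B : Finset (ι × κ)}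
    (h : Fintype.card ι * Fintype.card κ + Fintype.card κ < #A + #B) :
    ∃ m ∈ A ∩ B, m.1 ≠ i := by
  by_contra! hfst
  have hinter : #(A ∩ B) ≤ Fintype.card κ := by
    calc #(A ∩ B) ≤ #({i} ×ˢ (univ : Finset κ)) :=
          card_le_card fun m hm => by simpa [Prod.ext_iff, eq_comm] using hfst m hm
      _ = Fintype.card κ := by simp
  have hunion : #(A ∪ B) ≤ Fintype.card ι * Fintype.card κ := by
    simpa using card_le_univ (A ∪ B)
  have := card_union_add_card_inter A B
  omega

namespace grid

variable {n : ℕ}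

lemma adj_iff {x y : Fin n → ℤ} : (grid n).Adj x y ↔ ∑ i, |x i - y i| = 1 := Iff.rfl

lemma adj_add_single (x : Fin n → ℤ) (i : Fin n) (s : ℤˣ) :
    (grid n).Adj x (x + Pi.single i (s : ℤ)) := by
  simp only [adj_iff, Pi.add_apply, sub_add_cancel_left, abs_neg,
    Pi.apply_single (fun _ => abs) (fun _ => abs_zero), sum_pi_single', mem_univ, if_true]
  exact Int.isUnit_iff_abs_eq.1 s.isUnit

lemma adj_iff_exists_add_single {x y : Fin n → ℤ} :
    (grid n).Adj x y ↔ ∃ (i : Fin n) (s : ℤˣ), y = x + Pi.single i (s : ℤ) := by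
  refine ⟨fun hxy => ?_, by rintro ⟨i, s, rfl⟩; exact adj_add_single x i s⟩
  have h : ∑ j, |y j - x j| = 1 := adj_iff.1 hxy.symm
  have hnonneg : ∀ j ∈ univ, 0 ≤ |y j - x j| := fun j _ => abs_nonneg _
  obtain ⟨i, -, hi⟩ := exists_ne_zero_of_sum_ne_zero (h ▸ one_ne_zero : ∑ j, |y j - x j| ≠ 0)
  have hyi : |y i - x i| = 1 :=
    le_antisymm (h ▸ single_le_sum hnonneg (mem_univ i)) (Int.one_le_abs (abs_ne_zero.1 hi))
  have hyj : ∀ j ≠ i, y j = x j := fun j hj => by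
    have := add_le_sum hnonneg (mem_univ i) (mem_univ j) hj.symm
    rw [h, hyi] at this
    simpa [sub_eq_zero] using abs_nonpos_iff.1 (by omega : |y j - x j| ≤ 0)
  refine ⟨i, (Int.isUnit_iff_abs_eq.2 hyi).unit, funext fun j => ?_⟩
  rcases eq_or_ne j i with rfl | hj
  · simp
  · simp [hj, hyj j hj]

lemma add_single_injective (x : Fin n → ℤ) :
    Function.Injective fun m : Fin n × ℤˣ => x + Pi.single m.1 (m.2 : ℤ) := by
  rintro ⟨i, s⟩ ⟨j, t⟩ h
  have hi := congrFun (add_left_cancel h) i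
  obtain rfl : i = j := by
    by_contra hij
    simp [hij] at hi
  simpa [Units.ext_iff] using hi

def parityColoring : (grid n).Coloring Bool :=
  SimpleGraph.Coloring.mk (fun x => decide (Even (∑ i, x i))) fun {x y} hxy => by
    obtain ⟨i, s, rfl⟩ := adj_iff_exists_add_single.1 hxy
    have hs : ¬Even (s : ℤ) := by rcases Int.units_eq_one_or s with rfl | rfl <;> decide
    simp [sum_add_distrib, sum_pi_single', Int.even_add, hs, -Int.not_even_iff_odd]

lemma four_le_egirth : 4 ≤ (grid n).egirth :=
  SimpleGraph.four_le_egirth_of_coloring parityColoring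

def neighborSteps (S : Set (Fin n → ℤ)) [DecidablePred (· ∈ S)] (x : Fin n → ℤ) :
    Finset (Fin n × ℤˣ) :=
  {m | x + Pi.single m.1 (m.2 : ℤ) ∈ S}

@[simp]
lemma mem_neighborSteps {S : Set (Fin n → ℤ)} [DecidablePred (· ∈ S)] {x : Fin n → ℤ}
    {m : Fin n × ℤˣ} : m ∈ neighborSteps S x ↔ x + Pi.single m.1 (m.2 : ℤ) ∈ S := by
  simp [neighborSteps]

lemma card_neighborSteps {S : Set (Fin n → ℤ)} [DecidablePred (· ∈ S)] {x : Fin n → ℤ}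
    (hx : x ∈ S) :
    #(neighborSteps S x) = (((grid n).induce S).neighborSet ⟨x, hx⟩).ncard := by
  rw [← Set.ncard_coe_finset]
  refine Set.ncard_congr (fun m hm => (⟨x + Pi.single m.1 (m.2 : ℤ), mem_neighborSteps.1 hm⟩ : S))
    (fun m _ => ?_) (fun m m' _ _ h => ?_) ?_
  · exact adj_add_single x m.1 m.2
  · exact add_single_injective x (congrArg Subtype.val h)
  rintro ⟨y, hy⟩ hxy
  obtain ⟨i, s, rfl⟩ := adj_iff_exists_add_single.1 hxy
  exact ⟨(i, s), mem_neighborSteps.2 hy, rfl⟩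

lemma egirth_induce_le_four {S : Set (Fin n → ℤ)} {x : Fin n → ℤ} {i j : Fin n} (hij : i ≠ j)
    {s t : ℤˣ} (h₀ : x ∈ S) (h₁ : x + Pi.single i (s : ℤ) ∈ S)
    (h₂ : x + Pi.single i (s : ℤ) + Pi.single j (t : ℤ) ∈ S) (h₃ : x + Pi.single j (t : ℤ) ∈ S) :
    ((grid n).induce S).egirth ≤ 4 := by
  refine SimpleGraph.egirth_le_four_of_adj (a := ⟨_, h₀⟩) (b := ⟨_, h₁⟩) (c := ⟨_, h₂⟩) (d := ⟨_, h₃⟩)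
    (adj_add_single _ i s) (adj_add_single _ j t) ?_ (adj_add_single x j t).symm ?_ ?_
  · show (grid n).Adj (x + Pi.single i (s : ℤ) + Pi.single j (t : ℤ)) (x + Pi.single j (t : ℤ))
    rw [add_right_comm]
    exact (adj_add_single _ i s).symm
  all_goals
    intro h
    have := congrFun (congrArg Subtype.val h) i
    simp [hij, s.ne_zero] at this

end grid

open grid in
theorem girth_eq_four_of_degree_ge_add_two_general (n k : ℕ) (hk : n + 2 ≤ k)
    (S : Set (Fin n → ℤ)) (hS : S.Nonempty) (hreg : IsRegularInduced n S k) :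
    ((grid n).induce S).egirth = 4 := by
  classical
  have hdeg : ∀ x (hx : x ∈ S), #(neighborSteps S x) = k := fun x hx =>
    (card_neighborSteps hx).trans (hreg ⟨x, hx⟩)
  refine le_antisymm ?_ ?_
  · obtain ⟨x, hx⟩ := hS
    obtain ⟨⟨i, s⟩, hy⟩ : (neighborSteps S x).Nonempty := by
      rw [← card_pos, hdeg x hx]; omega
    rw [mem_neighborSteps] at hy
    obtain ⟨⟨j, t⟩, hsq, hji⟩ := exists_mem_inter_fst_ne i (A := neighborSteps S x)
      (B := neighborSteps S (x + Pi.single i (s : ℤ)))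
      (by rw [hdeg x hx, hdeg _ hy, Fintype.card_fin, Fintype.card_units_int]; omega)
    rw [mem_inter, mem_neighborSteps, mem_neighborSteps] at hsq
    exact egirth_induce_le_four (t := t) (Ne.symm hji) hx hy hsq.2 hsq.1
  · exact four_le_egirth.trans (SimpleGraph.Embedding.induce S).isContained.egirth_le

theorem girth_eq_four_of_degree_ge_add_two (n k : ℕ) (hn : 2 ≤ n) (hk : n + 2 ≤ k)
    (S : Set (Fin n → ℤ)) (hS : S.Nonempty) (hreg : IsRegularInduced n S k) :
    ((grid n).induce S).egirth = 4 :=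
  girth_eq_four_of_degree_ge_add_two_general n k hk S hS hreg
end

section
/- Let n ≥ 3 be an odd integer. Then every nonempty (n+1)-regular induced subgraph of the n-dimensional grid has girth at most 6. -/
/-!
If the induced graph contains a unit square its girth is `4`, so assume it does not. Then for
every edge `v, v + e` of `S` the two endpoints have no common neighbour direction off the axis
of `e`; as each endpoint has `n + 1` neighbours, at most two of them on that axis, each has at
least `n - 1` of the `2n - 2` off-axis directions, so their off-axis neighbourhoods are
complementary. Pick `v ∈ S` with both `v ± e_i ∈ S` (pigeonhole: `n + 1` neighbours on `n`
axes), a neighbour `w = v + e_p` with `p` off the axis `i`, and a neighbour `w + e_q` of `w`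
with `q` off the axis of `p` (and of `i` too, since complementarity across `v, w` forbids
`w ± e_i`).
Complementarity across `v, w`, across `v, v + e_i` and across `w, w + e_q` puts the hexagon
`v, w, w + e_q, w + e_q + e_i, v + e_q + e_i, v + e_i` into `S`.
-/

open Finset

namespace SimpleGraph

lemma egirth_le_length_of_nodup {V : Type*} {G : SimpleGraph V} {u : V} (w : G.Walk u u)
    (hlen : 3 ≤ w.length) (hnodup : w.support.tail.Nodup) : G.egirth ≤ w.length := by
  refine egirth_le_length (Walk.isCycle_iff_isPath_tail_and_le_length.mpr ⟨.mk' ?_, hlen⟩)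
  rwa [w.support_tail_of_not_nil (Walk.not_nil_iff_lt_length.mpr (by omega))]

end SimpleGraph

namespace Finset
variable {α : Type*}

lemma exists_mk_true_mem_and_mk_false_mem {A : Finset (α × Bool)} {s : Finset α}
    (hA : ∀ p ∈ A, p.1 ∈ s) (h : #s < #A) : ∃ i, (i, true) ∈ A ∧ (i, false) ∈ A := by
  obtain ⟨⟨i, a⟩, ha, ⟨j, b⟩, hb, hab, rfl : i = j⟩ :=
    exists_ne_map_eq_of_card_lt_of_maps_to h hA
  refine ⟨i, ?_⟩
  cases a <;> cases b <;> simp_all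

lemma card_filter_fst_eq_le_two [DecidableEq α] (A : Finset (α × Bool)) (i : α) :
    #{p ∈ A | p.1 = i} ≤ 2 := by
  refine (card_le_card (t := {(i, true), (i, false)}) fun p hp => ?_).trans card_le_two
  obtain ⟨j, b⟩ := p
  obtain ⟨-, rfl : j = i⟩ := mem_filter.mp hp
  cases b <;> simp

lemma card_filter_fst_ne [DecidableEq α] [Fintype α] (i : α) :
    #{p : α × Bool | p.1 ≠ i} = 2 * (Fintype.card α - 1) := by
  rw [show ({p : α × Bool | p.1 ≠ i} : Finset _) = (univ.erase i) ×ˢ univ by ext; simp,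
    card_product, card_erase_of_mem (mem_univ i), card_univ, card_univ, Fintype.card_bool, mul_comm]

lemma mem_iff_notMem_of_disjoint_of_card_le [DecidableEq α] {A B U : Finset α} (hA : A ⊆ U)
    (hB : B ⊆ U) (hAB : Disjoint A B) (hU : #U ≤ #A + #B) {x : α} (hx : x ∈ U) : x ∈ B ↔ x ∉ A := by
  have hunion : A ∪ B = U :=
    eq_of_subset_of_card_le (union_subset hA hB) (by rwa [card_union_of_disjoint hAB])
  refine ⟨fun hxB hxA => disjoint_left.mp hAB hxA hxB, fun hxA => ?_⟩
  rw [← hunion] at hx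
  exact (mem_union.mp hx).resolve_left hxA

end Finset

lemma Int.sum_abs_eq_one_iff {ι : Type*} [Fintype ι] [DecidableEq ι] (f : ι → ℤ) :
    ∑ i, |f i| = 1 ↔ ∃ i, ∃ s : ℤ, |s| = 1 ∧ f = Pi.single i s := by
  constructor
  · intro h
    obtain ⟨i, hi⟩ : ∃ i, f i ≠ 0 := by
      by_contra! h0
      simp [h0] at h
    have hsplit := add_sum_erase univ (fun j => |f j|) (mem_univ i)
    have hpos : 0 < |f i| := abs_pos.mpr hi
    have hnonneg : 0 ≤ ∑ j ∈ univ.erase i, |f j| := sum_nonneg fun j _ => abs_nonneg (f j)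
    have hrest : ∀ j ∈ univ.erase i, |f j| = 0 :=
      (sum_eq_zero_iff_of_nonneg fun j _ => abs_nonneg _).mp (by omega)
    refine ⟨i, f i, by omega, funext fun j => ?_⟩
    rcases eq_or_ne j i with rfl | hji
    · simp
    · simpa [hji] using hrest j (mem_erase.mpr ⟨hji, mem_univ j⟩)
  · rintro ⟨i, s, hs, rfl⟩
    rw [Finset.sum_eq_single i (fun j _ hj => by simp [hj]) (by simp)]
    simpa using hs

section
variable {n : ℕ} {S : Set (Fin n → ℤ)} {v : Fin n → ℤ}

def gridStep (p : Fin n × Bool) : Fin n → ℤ :=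
  Pi.single p.1 (if p.2 then 1 else -1)

lemma gridStep_apply_of_ne (p : Fin n × Bool) {j : Fin n} (h : j ≠ p.1) :
    gridStep p j = 0 :=
  Pi.single_eq_of_ne h _

lemma gridStep_apply_fst_ne_zero (p : Fin n × Bool) : gridStep p p.1 ≠ 0 := by
  rcases p with ⟨i, _ | _⟩ <;> simp [gridStep]

lemma gridStep_injective : Function.Injective (gridStep (n := n)) := by
  rintro ⟨i, a⟩ ⟨j, b⟩ h
  have hij : i = j := by
    by_contra hij
    exact gridStep_apply_fst_ne_zero (i, a) (h ▸ gridStep_apply_of_ne (j, b) hij)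
  subst hij
  have := congrFun h i
  cases a <;> cases b <;> simp_all [gridStep]

lemma grid_adj_iff_exists_gridStep {x y : Fin n → ℤ} :
    (grid n).Adj x y ↔ ∃ p, y = x + gridStep p := by
  change ∑ i, |x i - y i| = 1 ↔ _
  rw [show (∑ i, |x i - y i|) = ∑ i, |(y - x) i| by simp [abs_sub_comm], Int.sum_abs_eq_one_iff]
  simp_rw [← sub_eq_iff_eq_add']
  constructor
  · rintro ⟨i, s, hs, h⟩
    rcases abs_eq (zero_le_one' ℤ) |>.mp hs with rfl | rfl
    · exact ⟨(i, true), h⟩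
    · exact ⟨(i, false), h⟩
  · rintro ⟨⟨i, b⟩, h⟩
    exact ⟨i, if b then 1 else -1, by cases b <;> simp, h⟩

lemma grid_adj_add_gridStep (x : Fin n → ℤ) (p : Fin n × Bool) :
    (grid n).Adj x (x + gridStep p) :=
  grid_adj_iff_exists_gridStep.mpr ⟨p, rfl⟩

open scoped Classical in
noncomputable def neighborDirs (S : Set (Fin n → ℤ)) (v : Fin n → ℤ) : Finset (Fin n × Bool) :=
  {p | v + gridStep p ∈ S}

lemma mem_neighborDirs {p : Fin n × Bool} : p ∈ neighborDirs S v ↔ v + gridStep p ∈ S := by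
  classical
  simp [neighborDirs]

lemma ncard_neighborSet_induce_grid (hv : v ∈ S) :
    (((grid n).induce S).neighborSet ⟨v, hv⟩).ncard = #(neighborDirs S v) := by
  have himage : Subtype.val '' ((grid n).induce S).neighborSet ⟨v, hv⟩ =
      (v + gridStep ·) '' (neighborDirs S v : Set (Fin n × Bool)) := by
    ext y
    simp only [Set.mem_image, SimpleGraph.mem_neighborSet, SimpleGraph.induce_adj,
      Finset.mem_coe, mem_neighborDirs, Subtype.exists, exists_and_right, exists_eq_right,
      grid_adj_iff_exists_gridStep]
    constructor
    · rintro ⟨hy, p, rfl⟩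
      exact ⟨p, hy, rfl⟩
    · rintro ⟨p, hp, rfl⟩
      exact ⟨hp, p, rfl⟩
  rw [← Set.ncard_image_of_injective _ Subtype.val_injective, himage,
    Set.ncard_image_of_injective _ fun p q h => gridStep_injective (add_left_cancel h),
    Set.ncard_coe_finset]

lemma IsRegularInduced.card_neighborDirs {k : ℕ} (hreg : IsRegularInduced n S k) (hv : v ∈ S) :
    #(neighborDirs S v) = k :=
  (ncard_neighborSet_induce_grid hv).symm.trans (hreg ⟨v, hv⟩)

lemma induce_grid_adj_of_eq_add_gridStep {x y : S} (p : Fin n × Bool)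
    (h : y.1 = x.1 + gridStep p) : ((grid n).induce S).Adj x y :=
  SimpleGraph.induce_adj.mpr (h ▸ grid_adj_add_gridStep x.1 p)

lemma egirth_induce_grid_le_four {x : Fin n → ℤ} {p q : Fin n × Bool} (hpq : p.1 ≠ q.1)
    (h₀ : x ∈ S) (hp : x + gridStep p ∈ S) (hq : x + gridStep q ∈ S)
    (hpq' : x + gridStep p + gridStep q ∈ S) : ((grid n).induce S).egirth ≤ 4 := by
  let a : S := ⟨x, h₀⟩
  let b : S := ⟨_, hp⟩
  let c : S := ⟨_, hpq'⟩
  let d : S := ⟨_, hq⟩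
  let w : ((grid n).induce S).Walk a a :=
    .cons (v := b) (induce_grid_adj_of_eq_add_gridStep p rfl) <|
    .cons (v := c) (induce_grid_adj_of_eq_add_gridStep q rfl) <|
    .cons (v := d) (induce_grid_adj_of_eq_add_gridStep p (add_right_comm _ _ _)).symm <|
    .cons (induce_grid_adj_of_eq_add_gridStep q rfl).symm .nil
  have hlen : w.length = 4 := rfl
  refine (SimpleGraph.egirth_le_length_of_nodup w (by omega) ?_).trans_eq (by rw [hlen]; rfl)
  refine List.Nodup.of_map (fun v : S => (v.1 p.1 - x p.1, v.1 q.1 - x q.1)) ?_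
  have hp0 := gridStep_apply_fst_ne_zero p
  have hq0 := gridStep_apply_fst_ne_zero q
  simp only [w, SimpleGraph.Walk.support_cons, SimpleGraph.Walk.support_nil, List.tail_cons,
    List.map_cons, List.map_nil]
  simp [a, b, c, d, gridStep_apply_of_ne p hpq.symm, gridStep_apply_of_ne q hpq, hp0, hq0,
    hq0.symm]

lemma egirth_induce_grid_le_six_of_hexagon {x : Fin n → ℤ} {p q r : Fin n × Bool}
    (hpq : p.1 ≠ q.1) (hpr : p.1 ≠ r.1) (hqr : q.1 ≠ r.1) (h₀ : x ∈ S) (hp : x + gridStep p ∈ S)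
    (hpq' : x + gridStep p + gridStep q ∈ S)
    (hpqr : x + gridStep p + gridStep q + gridStep r ∈ S)
    (hqr' : x + gridStep q + gridStep r ∈ S) (hr : x + gridStep r ∈ S) :
    ((grid n).induce S).egirth ≤ 6 := by
  let a : S := ⟨x, h₀⟩
  let b : S := ⟨_, hp⟩
  let c : S := ⟨_, hpq'⟩
  let d : S := ⟨_, hpqr⟩
  let e : S := ⟨_, hqr'⟩
  let f : S := ⟨_, hr⟩
  let w : ((grid n).induce S).Walk a a :=
    .cons (v := b) (induce_grid_adj_of_eq_add_gridStep p rfl) <|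
    .cons (v := c) (induce_grid_adj_of_eq_add_gridStep q rfl) <|
    .cons (v := d) (induce_grid_adj_of_eq_add_gridStep r rfl) <|
    .cons (v := e) (induce_grid_adj_of_eq_add_gridStep p (by simp only [d, e]; abel)).symm <|
    .cons (v := f) (induce_grid_adj_of_eq_add_gridStep q (add_right_comm _ _ _)).symm <|
    .cons (induce_grid_adj_of_eq_add_gridStep r rfl).symm .nil
  have hlen : w.length = 6 := rfl
  refine (SimpleGraph.egirth_le_length_of_nodup w (by omega) ?_).trans_eq (by rw [hlen]; rfl)
  refine List.Nodup.of_map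
    (fun v : S => (v.1 p.1 - x p.1, v.1 q.1 - x q.1, v.1 r.1 - x r.1)) ?_
  have hp0 := gridStep_apply_fst_ne_zero p
  have hq0 := gridStep_apply_fst_ne_zero q
  have hr0 := gridStep_apply_fst_ne_zero r
  simp only [w, SimpleGraph.Walk.support_cons, SimpleGraph.Walk.support_nil, List.tail_cons,
    List.map_cons, List.map_nil]
  simp [a, b, c, d, e, f, gridStep_apply_of_ne p hpq.symm, gridStep_apply_of_ne p hpr.symm,
    gridStep_apply_of_ne q hpq, gridStep_apply_of_ne q hqr.symm, gridStep_apply_of_ne r hpr,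
    gridStep_apply_of_ne r hqr, hp0, hq0, hr0, hq0.symm, hr0.symm]

def NoUnitSquare (S : Set (Fin n → ℤ)) : Prop :=
  ∀ ⦃x : Fin n → ℤ⦄ ⦃p q : Fin n × Bool⦄, p.1 ≠ q.1 → x ∈ S → x + gridStep p ∈ S →
    x + gridStep q ∈ S → x + gridStep p + gridStep q ∉ S

lemma IsRegularInduced.le_card_filter_neighborDirs_fst_ne (hreg : IsRegularInduced n S (n + 1))
    (hv : v ∈ S) (i : Fin n) : n - 1 ≤ #{p ∈ neighborDirs S v | p.1 ≠ i} := by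
  have hsplit := card_filter_add_card_filter_not (s := neighborDirs S v) (fun p => p.1 = i)
  simp only [← ne_eq] at hsplit
  have := card_filter_fst_eq_le_two (neighborDirs S v) i
  have := hreg.card_neighborDirs hv
  omega

lemma IsRegularInduced.exists_add_gridStep_mem_of_fst_ne (hn : 2 ≤ n)
    (hreg : IsRegularInduced n S (n + 1)) (hv : v ∈ S) (i : Fin n) :
    ∃ p : Fin n × Bool, p.1 ≠ i ∧ v + gridStep p ∈ S := by
  obtain ⟨p, hp⟩ := card_pos.mp <| (by omega : 0 < n - 1).trans_le <|
    hreg.le_card_filter_neighborDirs_fst_ne hv i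
  obtain ⟨hp, hpi⟩ := mem_filter.mp hp
  exact ⟨p, hpi, mem_neighborDirs.mp hp⟩

lemma IsRegularInduced.exists_axis_add_gridStep_mem (hreg : IsRegularInduced n S (n + 1))
    (hv : v ∈ S) : ∃ i, v + gridStep (i, true) ∈ S ∧ v + gridStep (i, false) ∈ S := by
  obtain ⟨i, ht, hf⟩ := exists_mk_true_mem_and_mk_false_mem (A := neighborDirs S v) (s := univ)
    (fun p _ => mem_univ p.1) (by simp [hreg.card_neighborDirs hv])
  exact ⟨i, mem_neighborDirs.mp ht, mem_neighborDirs.mp hf⟩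

lemma NoUnitSquare.add_gridStep_add_gridStep_mem_iff (hsq : NoUnitSquare S)
    (hreg : IsRegularInduced n S (n + 1)) {p q : Fin n × Bool} (hv : v ∈ S)
    (hp : v + gridStep p ∈ S) (hqp : q.1 ≠ p.1) :
    v + gridStep p + gridStep q ∈ S ↔ v + gridStep q ∉ S := by
  have key := mem_iff_notMem_of_disjoint_of_card_le
    (A := {r ∈ neighborDirs S v | r.1 ≠ p.1})
    (B := {r ∈ neighborDirs S (v + gridStep p) | r.1 ≠ p.1})
    (U := {r | r.1 ≠ p.1}) (filter_subset_filter _ (subset_univ _))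
    (filter_subset_filter _ (subset_univ _))
    (disjoint_left.mpr fun r hrA hrB => by
      simp only [mem_filter, mem_neighborDirs] at hrA hrB
      exact hsq hrA.2.symm hv hp hrA.1 hrB.1)
    (by
      have := hreg.le_card_filter_neighborDirs_fst_ne hv p.1
      have := hreg.le_card_filter_neighborDirs_fst_ne hp p.1
      rw [card_filter_fst_ne, Fintype.card_fin]
      omega)
    (x := q) (by simpa using hqp)
  simpa [mem_neighborDirs, hqp] using key

lemma NoUnitSquare.egirth_induce_grid_le_six (hsq : NoUnitSquare S) (hn : 2 ≤ n)
    (hreg : IsRegularInduced n S (n + 1)) (hne : S.Nonempty) :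
    ((grid n).induce S).egirth ≤ 6 := by
  obtain ⟨v, hv⟩ := hne
  obtain ⟨i, hvi, hvi'⟩ := hreg.exists_axis_add_gridStep_mem hv
  obtain ⟨p, hpi, hw⟩ := hreg.exists_add_gridStep_mem_of_fst_ne hn hv i
  set w := v + gridStep p
  have hflip {q : Fin n × Bool} (hq : q.1 ≠ p.1) : w + gridStep q ∈ S ↔ v + gridStep q ∉ S :=
    hsq.add_gridStep_add_gridStep_mem_iff hreg hv hw hq
  have hwi (b : Bool) : w + gridStep (i, b) ∉ S := by
    rw [hflip (Ne.symm hpi), not_not]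
    cases b
    exacts [hvi', hvi]
  obtain ⟨q, hqp, hwq⟩ := hreg.exists_add_gridStep_mem_of_fst_ne hn hw p.1
  have hqi : q.1 ≠ i := fun hqi => hwi q.2 (hqi ▸ hwq)
  have hviq : v + gridStep (i, true) + gridStep q ∈ S :=
    (hsq.add_gridStep_add_gridStep_mem_iff hreg hv hvi hqi).mpr ((hflip hqp).mp hwq)
  have hwqi : w + gridStep q + gridStep (i, true) ∈ S :=
    (hsq.add_gridStep_add_gridStep_mem_iff hreg hw hwq (Ne.symm hqi)).mpr (hwi true)
  exact egirth_induce_grid_le_six_of_hexagon (Ne.symm hqp) hpi hqi hv hw hwq hwqi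
    (by rwa [add_right_comm]) hvi

end

theorem girth_le_six_of_odd_dim_general (n : ℕ) (hn : 3 ≤ n)
    (S : Set (Fin n → ℤ)) (hS : S.Nonempty) (hreg : IsRegularInduced n S (n + 1)) :
    ((grid n).induce S).egirth ≤ 6 := by
  by_cases hsq : NoUnitSquare S
  · exact hsq.egirth_induce_grid_le_six (by omega) hreg hS
  · simp only [NoUnitSquare, not_forall, not_not] at hsq
    obtain ⟨x, p, q, hpq, hx, hp, hq, hpq'⟩ := hsq
    exact (egirth_induce_grid_le_four hpq hx hp hq hpq').trans (by norm_num)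

theorem girth_le_six_of_odd_dim (n : ℕ) (hn : 3 ≤ n) (hodd : Odd n)
    (S : Set (Fin n → ℤ)) (hS : S.Nonempty) (hreg : IsRegularInduced n S (n + 1)) :
    ((grid n).induce S).egirth ≤ 6 :=
  girth_le_six_of_odd_dim_general n hn S hS hreg
end

section
/- Let n ≥ 3 be an odd integer, and let S = { (x_1, …, x_n) ∈ ℤ^n : ∑_{i=1}^n (−1)^{x_i} = 1 or ∑_{i=1}^n (−1)^{x_i} = −1 }. Then the induced subgraph of the n-dimensional grid on S is (n+1)-regular and has girth exactly 6. -/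
open Function Finset SimpleGraph

lemma odd_of_eq_one_or_eq_neg_one {e : ℤ} (he : e = 1 ∨ e = -1) : Odd e := by
  rcases he with rfl | rfl <;> decide

lemma coe_negOnePow_eq_one_or_eq_neg_one (a : ℤ) :
    (a.negOnePow : ℤ) = 1 ∨ (a.negOnePow : ℤ) = -1 := by
  rcases Int.units_eq_one_or a.negOnePow with h | h <;> simp [h]

section SignSum

variable {ι : Type*} [Fintype ι]

def signSum (x : ι → ℤ) : ℤ := ∑ i, ((x i).negOnePow : ℤ)

def nearlyBalanced (ι : Type*) [Fintype ι] : Set (ι → ℤ) :=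
  {x | signSum x = 1 ∨ signSum x = -1}

lemma two_mul_card_filter_negOnePow_eq {x : ι → ℤ} (hx : x ∈ nearlyBalanced ι) :
    2 * #{i | ((x i).negOnePow : ℤ) = signSum x} = Fintype.card ι + 1 := by
  have hterm : ∀ i, signSum x * (x i).negOnePow
      = 2 * (if ((x i).negOnePow : ℤ) = signSum x then 1 else 0) - 1 := by
    intro i
    rcases hx with h | h <;> rcases coe_negOnePow_eq_one_or_eq_neg_one (x i) with h' | h' <;>
      simp [h, h']
  have hsq : ∑ i, signSum x * (x i).negOnePow = 1 := by
    rw [← mul_sum]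
    rcases hx with h | h <;> simp [signSum] at h ⊢ <;> simp [h]
  rw [sum_congr rfl fun i _ => hterm i, sum_sub_distrib, ← mul_sum, sum_boole, sum_const,
    card_univ] at hsq
  simp only [nsmul_eq_mul, mul_one] at hsq
  omega

variable [DecidableEq ι]

lemma signSum_add_single (x : ι → ℤ) (i : ι) {e : ℤ} (he : Odd e) :
    signSum (x + Pi.single i e) = signSum x - 2 * (x i).negOnePow := by
  have hrest : ∀ j ∈ ({i}ᶜ : Finset ι),
      (((x + Pi.single i e : ι → ℤ) j).negOnePow : ℤ) = (x j).negOnePow := fun j hj => by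
    rw [Pi.add_apply, Pi.single_eq_of_ne (by simpa using hj), add_zero]
  rw [signSum, signSum, Fintype.sum_eq_add_sum_compl i, Fintype.sum_eq_add_sum_compl i,
    sum_congr rfl hrest, Pi.add_apply, Pi.single_eq_same, Int.negOnePow_add,
    Int.negOnePow_odd e he]
  push_cast
  ring

lemma add_single_mem_nearlyBalanced_iff {x : ι → ℤ} (hx : x ∈ nearlyBalanced ι) (i : ι)
    {e : ℤ} (he : Odd e) :
    x + Pi.single i e ∈ nearlyBalanced ι ↔ ((x i).negOnePow : ℤ) = signSum x := by
  simp only [nearlyBalanced, Set.mem_ofPred_eq, signSum_add_single x i he]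
  rcases hx with h | h <;> rcases coe_negOnePow_eq_one_or_eq_neg_one (x i) with h' | h' <;>
    rw [h, h'] <;> norm_num

lemma add_single_add_single_notMem_nearlyBalanced {x : ι → ℤ} (hx : x ∈ nearlyBalanced ι)
    {i j : ι} (hij : i ≠ j) {e f : ℤ} (he : Odd e) (hf : Odd f)
    (hi : x + Pi.single i e ∈ nearlyBalanced ι) (hj : x + Pi.single j f ∈ nearlyBalanced ι) :
    x + Pi.single i e + Pi.single j f ∉ nearlyBalanced ι := by
  intro hij'
  have hxj := (add_single_mem_nearlyBalanced_iff hx j hf).mp hj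
  have hxij := (add_single_mem_nearlyBalanced_iff hi j hf).mp hij'
  rw [Pi.add_apply, Pi.single_eq_of_ne hij.symm, add_zero, signSum_add_single x i he,
    (add_single_mem_nearlyBalanced_iff hx i he).mp hi] at hxij
  rcases hx with h | h <;> omega

end SignSum

lemma ne_and_eq_of_single_add_single_eq {ι : Type*} [DecidableEq ι] {i j k l : ι} {e f g d : ℤ}
    (he : e = 1 ∨ e = -1) (hf : f = 1 ∨ f = -1) (hg : g = 1 ∨ g = -1) (hd : d = 1 ∨ d = -1)
    (H : (Pi.single i e + Pi.single j f : ι → ℤ) = Pi.single k g + Pi.single l d)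
    (h₀ : (Pi.single i e + Pi.single j f : ι → ℤ) ≠ 0)
    (h₁ : (Pi.single i e : ι → ℤ) ≠ Pi.single k g) :
    i ≠ j ∧ k = j ∧ g = f := by
  have hij : i = j → e + f ≠ 0 := by
    rintro rfl hef
    rw [← Pi.single_add, hef, Pi.single_zero] at h₀
    exact h₀ rfl
  have hik : i = k → e ≠ g := by
    rintro rfl rfl
    exact h₁ rfl
  have Hi := congrFun H i
  have Hj := congrFun H j
  have Hk := congrFun H k
  have Hl := congrFun H l
  simp only [Pi.add_apply, Pi.single_apply] at Hi Hj Hk Hl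
  -- a case split on which of `i, j, k, l` coincide
  grind

section Grid

variable {n : ℕ}

lemma grid_adj {x y : Fin n → ℤ} : (grid n).Adj x y ↔ ∑ i, |x i - y i| = 1 := Iff.rfl

lemma grid_adj_iff {x y : Fin n → ℤ} :
    (grid n).Adj x y ↔ ∃ i e, (e = 1 ∨ e = -1) ∧ y = x + Pi.single i e := by
  constructor
  · intro h
    rw [grid_adj] at h
    obtain ⟨i, -, hi⟩ : ∃ i ∈ univ, |x i - y i| ≠ 0 := by
      by_contra! h0
      rw [sum_eq_zero h0] at h
      exact zero_ne_one h
    have hsplit := add_sum_erase univ (fun j => |x j - y j|) (mem_univ i)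
    have hrest := sum_nonneg (s := univ.erase i) fun j _ => abs_nonneg (x j - y j)
    have hxi : |x i - y i| = 1 := by have := abs_nonneg (x i - y i); omega
    have hzero := (sum_eq_zero_iff_of_nonneg fun j _ => abs_nonneg (x j - y j)).mp
      (by omega : ∑ j ∈ univ.erase i, |x j - y j| = 0)
    rw [abs_sub_comm] at hxi
    refine ⟨i, y i - x i, (abs_eq zero_le_one).mp hxi, funext fun j => ?_⟩
    by_cases hj : j = i
    · subst hj; simp
    · have := abs_eq_zero.mp (hzero j (mem_erase.mpr ⟨hj, mem_univ j⟩))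
      simp only [Pi.add_apply, Pi.single_eq_of_ne hj]
      omega
  · rintro ⟨i, e, he, rfl⟩
    rw [grid_adj]
    simp only [Pi.add_apply, sub_add_cancel_left, abs_neg]
    rw [sum_eq_single i (fun j _ hj => by rw [Pi.single_eq_of_ne hj, abs_zero]) (by simp),
      Pi.single_eq_same]
    rcases he with rfl | rfl <;> norm_num

lemma grid_colorable_two : (grid n).Colorable 2 := by
  refine ZMod.card 2 ▸
    (Coloring.mk (fun x => ((∑ i, x i : ℤ) : ZMod 2)) fun {x y} h => ?_).colorable
  obtain ⟨i, e, he, rfl⟩ := grid_adj_iff.mp h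
  rw [Pi.add_def, sum_add_distrib, Fintype.sum_pi_single', Int.cast_add, ne_eq, left_eq_add]
  rcases he with rfl | rfl <;> decide

lemma grid_four_cycle_eq_square {x₀ x₁ x₂ x₃ : Fin n → ℤ} (h₀₁ : (grid n).Adj x₀ x₁)
    (h₁₂ : (grid n).Adj x₁ x₂) (h₀₃ : (grid n).Adj x₀ x₃) (h₃₂ : (grid n).Adj x₃ x₂)
    (h₀₂ : x₀ ≠ x₂) (h₁₃ : x₁ ≠ x₃) :
    ∃ i j e f, i ≠ j ∧ (e = 1 ∨ e = -1) ∧ (f = 1 ∨ f = -1) ∧ x₁ = x₀ + Pi.single i e ∧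
      x₃ = x₀ + Pi.single j f ∧ x₂ = x₀ + Pi.single i e + Pi.single j f := by
  obtain ⟨i, e, he, rfl⟩ := grid_adj_iff.mp h₀₁
  obtain ⟨j, f, hf, rfl⟩ := grid_adj_iff.mp h₁₂
  obtain ⟨k, g, hg, rfl⟩ := grid_adj_iff.mp h₀₃
  obtain ⟨l, d, hd, H⟩ := grid_adj_iff.mp h₃₂
  rw [add_assoc, add_assoc, add_right_inj] at H
  rw [add_assoc, ne_eq, left_eq_add] at h₀₂
  rw [ne_eq, add_right_inj] at h₁₃
  obtain ⟨hij, rfl, rfl⟩ := ne_and_eq_of_single_add_single_eq he hf hg hd H h₀₂ h₁₃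
  exact ⟨i, k, e, g, hij, he, hg, rfl, rfl, rfl⟩

lemma cycleGraph_four_free_induce_nearlyBalanced :
    (cycleGraph 4).Free ((grid n).induce (nearlyBalanced (Fin n))) := by
  rintro ⟨c⟩
  let x : Fin 4 → Fin n → ℤ := fun k => c k
  have hmem : ∀ k, x k ∈ nearlyBalanced (Fin n) := fun k => (c k).2
  have hadj : ∀ k, (grid n).Adj (x k) (x (k + 1)) := fun k =>
    c.toHom.map_adj (by revert k; decide)
  have hne : ∀ k, x k ≠ x (k + 2) := fun k h =>
    (by decide : ∀ k : Fin 4, k ≠ k + 2) k (c.injective (Subtype.ext h))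
  obtain ⟨i, j, e, f, hij, he, hf, h₁, h₃, h₂⟩ :=
    grid_four_cycle_eq_square (hadj 0) (hadj 1) (hadj 3).symm (hadj 2).symm (hne 0) (hne 1)
  exact add_single_add_single_notMem_nearlyBalanced (hmem 0) hij
    (odd_of_eq_one_or_eq_neg_one he) (odd_of_eq_one_or_eq_neg_one hf)
    (h₁ ▸ hmem 1) (h₃ ▸ hmem 3) (h₂ ▸ hmem 2)

lemma six_le_egirth_induce_nearlyBalanced :
    6 ≤ ((grid n).induce (nearlyBalanced (Fin n))).egirth := by
  rw [le_egirth]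
  intro a w hw
  have heven : Even w.length := two_colorable_iff_forall_loop_even.mp
    (grid_colorable_two.of_hom (Embedding.induce _).toHom) a w
  have h4 : w.length ≠ 4 := fun h => cycleGraph_four_free_induce_nearlyBalanced
    ((cycleGraph_isContained_iff (by norm_num)).mpr ⟨a, w, hw, h⟩)
  have h3 := hw.three_le_length
  have : 6 ≤ w.length := by rcases heven with ⟨k, hk⟩; omega
  exact_mod_cast this

lemma grid_adj_append {m k : ℕ} {u u' : Fin m → ℤ} (w : Fin k → ℤ) :
    (grid (m + k)).Adj (Fin.append u w) (Fin.append u' w) ↔ (grid m).Adj u u' := by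
  simp [grid_adj, Fin.sum_univ_add]

lemma signSum_append {m k : ℕ} (u : Fin m → ℤ) (w : Fin k → ℤ) :
    signSum (Fin.append u w) = signSum u + signSum w := by
  simp [signSum, Fin.sum_univ_add]

lemma signSum_natCast_fin_of_even {k : ℕ} (hk : Even k) :
    signSum (fun t : Fin k => (t : ℤ)) = 0 := by
  simp only [signSum, Int.coe_negOnePow_natCast]
  rw [Fin.sum_univ_eq_sum_range (fun i => (-1 : ℤ) ^ i), neg_one_geom_sum, if_pos hk]

/-- The vertices of `{0, 1}³` other than `000` and `111`, in cyclic order. -/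
def hexagon : Fin 6 → Fin 3 → ℤ :=
  ![![1, 0, 0], ![1, 1, 0], ![0, 1, 0], ![0, 1, 1], ![0, 0, 1], ![1, 0, 1]]

lemma cycleGraph_six_isContained_induce_nearlyBalanced {m : ℕ} (hm : Even m) :
    cycleGraph 6 ⊑ (grid (3 + m)).induce (nearlyBalanced (Fin (3 + m))) := by
  let w : Fin m → ℤ := fun t => t
  have hhex : ∀ k, hexagon k ∈ nearlyBalanced (Fin 3) := by
    unfold nearlyBalanced
    decide
  have hmem : ∀ k, Fin.append (hexagon k) w ∈ nearlyBalanced (Fin (3 + m)) := fun k => by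
    rw [nearlyBalanced, Set.mem_ofPred_eq, signSum_append, signSum_natCast_fin_of_even hm,
      add_zero]
    exact hhex k
  have hadj : ∀ k l, (cycleGraph 6).Adj k l → ∑ t, |hexagon k t - hexagon l t| = 1 := by
    decide
  have hinj : Injective hexagon := by decide
  refine ⟨⟨⟨fun k => ⟨Fin.append (hexagon k) w, hmem k⟩, fun {k l} h => ?_⟩, fun k l h => ?_⟩⟩
  · exact (grid_adj_append w).mpr (hadj k l h)
  · have h' : Fin.append (hexagon k) w = Fin.append (hexagon l) w := congrArg Subtype.val h
    exact hinj (funext fun t => by simpa using congrFun h' (Fin.castAdd m t))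

lemma egirth_induce_nearlyBalanced_le_six (hn : 3 ≤ n) (hodd : Odd n) :
    ((grid n).induce (nearlyBalanced (Fin n))).egirth ≤ 6 := by
  obtain ⟨m, rfl⟩ : ∃ m, n = 3 + m := ⟨n - 3, by omega⟩
  have hm : Even m := by rcases hodd with ⟨k, hk⟩; exact ⟨k - 1, by omega⟩
  obtain ⟨v, p, hp, hl⟩ := (cycleGraph_isContained_iff (by norm_num)).mp
    (cycleGraph_six_isContained_induce_nearlyBalanced hm)
  simpa [hl] using egirth_le_length hp

lemma ncard_neighborSet_induce_nearlyBalanced (v : nearlyBalanced (Fin n)) :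
    (((grid n).induce (nearlyBalanced (Fin n))).neighborSet v).ncard = n + 1 := by
  set x : Fin n → ℤ := v.1
  set T : Finset (Fin n) := {i | ((x i).negOnePow : ℤ) = signSum x}
  have himage : Subtype.val '' ((grid n).induce (nearlyBalanced (Fin n))).neighborSet v =
      ((T ×ˢ {1, -1}).image fun p => x + Pi.single p.1 p.2 : Finset (Fin n → ℤ)) := by
    ext y
    simp only [Set.mem_image, neighborSet_induce, Set.mem_preimage, mem_neighborSet, coe_image,
      coe_product, Set.mem_prod, Prod.exists, mem_coe, mem_filter, mem_univ, true_and,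
      mem_insert, mem_singleton, T]
    constructor
    · rintro ⟨⟨y, hy⟩, hadj, rfl⟩
      obtain ⟨i, e, he, rfl⟩ := grid_adj_iff.mp hadj
      have hstep := add_single_mem_nearlyBalanced_iff v.2 i (odd_of_eq_one_or_eq_neg_one he)
      exact ⟨i, e, ⟨hstep.mp hy, he⟩, rfl⟩
    · rintro ⟨i, e, ⟨hi, he⟩, rfl⟩
      have hstep := add_single_mem_nearlyBalanced_iff v.2 i (odd_of_eq_one_or_eq_neg_one he)
      exact ⟨⟨_, hstep.mpr hi⟩, grid_adj_iff.mpr ⟨i, e, he, rfl⟩, rfl⟩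
  have hinj : Set.InjOn (fun p : Fin n × ℤ => x + Pi.single p.1 p.2) ↑(T ×ˢ {1, -1}) := by
    rintro ⟨i, e⟩ hie ⟨j, f⟩ - h
    have he : e ≠ 0 := by
      simp only [coe_product, Set.mem_prod, mem_coe, mem_insert, mem_singleton] at hie
      omega
    have hsingle : Pi.single i e = Pi.single j f := add_left_cancel (a := x) h
    obtain rfl : i = j := by
      by_contra hij
      exact he (by simpa [Pi.single_eq_of_ne hij] using congrFun hsingle i)
    simpa using hsingle
  rw [← Set.ncard_image_of_injective _ Subtype.val_injective, himage, Set.ncard_coe_finset,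
    card_image_of_injOn hinj, card_product, card_pair (by norm_num), mul_comm,
    two_mul_card_filter_negOnePow_eq v.2, Fintype.card_fin]

end Grid

theorem regular_girth_six_example (n : ℕ) (hn : 3 ≤ n) (hodd : Odd n)
    (S : Set (Fin n → ℤ))
    (hS : S = {x | ∑ i, ((x i).negOnePow : ℤ) = 1 ∨ ∑ i, ((x i).negOnePow : ℤ) = -1}) :
    IsRegularInduced n S (n + 1) ∧ ((grid n).induce S).egirth = 6 := by
  obtain rfl : S = nearlyBalanced (Fin n) := hS
  exact ⟨ncard_neighborSet_induce_nearlyBalanced,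
    le_antisymm (egirth_induce_nearlyBalanced_le_six hn hodd) six_le_egirth_induce_nearlyBalanced⟩
end

section
/- Let n, m, k be integers with n ≥ m ≥ 1 and 0 ≤ k ≤ 2n, and let Γ be a nonempty k-regular subgraph of the n-dimensional grid. Then there exists a unit m-hypercube H in ℤ^n containing at least one vertex of Γ such that the number of edges of Γ with both endpoints in H is at least (k·m)/(4n) times the number of vertices of Γ lying in H. -/
/-- A unit `m`-hypercube in `ℤ^n`, determined by a base point `a` and a set `I` of `m`
coordinate directions. -/
def unitCube {n : ℕ} (a : Fin n → ℤ) (I : Finset (Fin n)) : Set (Fin n → ℤ) :=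
  {x | ∀ i, if i ∈ I then x i = a i ∨ x i = a i + 1 else x i = a i}

/-!
Fix a vertex `c` of `H`, let `A r` count the vertices of `H` in the box of radius `r` around `c`,
and put `D = k m 2^m`. Since `A r ≤ (2r + 1)^n` grows polynomially, `D A(r + 3) < (D + 1) A(r)`
for some `r`. The edges of `H` with lower end in the box of radius `r + 1` number at least
`k A(r) / 2`; averaging over `m`-sets of directions, some `I` carries an `m / n` share of them.
Each such edge lies in `2^(m-1)` unit cubes with directions `I` and base point in the box of
radius `r + 2`, while each vertex lies in at most `2^m` of these cubes, all inside the box of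
radius `r + 3`. Summing over these cubes, `4n · #edges + [base ∈ H]` exceeds `k m · #vertices`
in total, hence in some cube, which is then the one sought.
-/

open Finset

theorem exists_card_eq_mul_sum_le {ι : Type*} [Fintype ι] [DecidableEq ι] (d : ι → ℕ)
    {m : ℕ} (hm : 1 ≤ m) (hmι : m ≤ Fintype.card ι) :
    ∃ I : Finset ι, #I = m ∧ m * ∑ j, d j ≤ Fintype.card ι * ∑ j ∈ I, d j := by
  set N := Fintype.card ι
  set P := powersetCard m (univ : Finset ι)
  have hcount (j : ι) : #{I ∈ P | j ∈ I} = (N - 1).choose (m - 1) := by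
    simpa [P] using card_filter_powersetCard_subset {j} univ m (subset_univ _) (by simpa using hm)
  have hdouble : ∑ I ∈ P, ∑ j ∈ I, d j = (N - 1).choose (m - 1) * ∑ j, d j := by
    have := sum_sum_bipartiteAbove_eq_sum_sum_bipartiteBelow (fun I j => j ∈ I) (s := P)
      (t := univ) (fun _ j => d j)
    simp only [bipartiteAbove, bipartiteBelow, filter_mem_eq_inter, univ_inter, sum_const,
      smul_eq_mul] at this
    rw [this, mul_sum]
    exact sum_congr rfl fun j _ => by rw [hcount, mul_comm]
  have hchoose : N * (N - 1).choose (m - 1) = N.choose m * m := by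
    have := Nat.add_one_mul_choose_eq (N - 1) (m - 1)
    rwa [Nat.sub_add_cancel (hm.trans hmι), Nat.sub_add_cancel hm] at this
  obtain ⟨I, hI, hle⟩ := exists_le_of_sum_le (s := P)
    (powersetCard_nonempty.2 (by simpa using hmι))
    (f := fun _ => m * ∑ j, d j) (g := fun I => N * ∑ j ∈ I, d j) <| by
      rw [sum_const, ← mul_sum, hdouble, card_powersetCard, card_univ, smul_eq_mul, ← mul_assoc,
        ← mul_assoc, hchoose]
  exact ⟨I, (mem_powersetCard.1 hI).2, hle⟩

open Filter in
theorem exists_mul_lt_succ_mul_of_le_pow {A : ℕ → ℕ} (hA : 0 < A 0) {d : ℕ}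
    (hpoly : ∀ r, A r ≤ (2 * r + 1) ^ d) (D s : ℕ) : ∃ r, D * A (r + s) < (D + 1) * A r := by
  by_contra! hstep
  -- Otherwise `A (s t) ≥ ((D + 1) / D) ^ t` outgrows the polynomial bound.
  have hgrow (t : ℕ) : (D + 1) ^ t ≤ D ^ t * A (s * t) := by
    induction t with
    | zero => simpa using Nat.succ_le_of_lt hA
    | succ t ih =>
      calc (D + 1) ^ (t + 1) = (D + 1) ^ t * (D + 1) := pow_succ _ _
        _ ≤ D ^ t * ((D + 1) * A (s * t)) := by rw [mul_comm _ (A _), ← mul_assoc]; gcongr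
        _ ≤ D ^ t * (D * A (s * t + s)) := Nat.mul_le_mul_left _ (hstep _)
        _ = D ^ (t + 1) * A (s * (t + 1)) := by ring_nf
  set q : ℝ := D / (D + 1)
  have hq : q < 1 := (div_lt_one (by positivity)).2 (by linarith)
  have hlim := (tendsto_pow_const_mul_const_pow_of_lt_one d (by positivity) hq).const_mul
    (((2 * s + 1 : ℕ) : ℝ) ^ d)
  rw [mul_zero] at hlim
  obtain ⟨t, ht, ht1⟩ := ((hlim.eventually (gt_mem_nhds one_pos)).and
    (eventually_ge_atTop 1)).exists
  have hbound : (D + 1) ^ t ≤ D ^ t * ((2 * s + 1) * t) ^ d := by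
    refine (hgrow t).trans (Nat.mul_le_mul_left _ ((hpoly _).trans ?_))
    gcongr
    nlinarith
  have hpos : (0 : ℝ) < (D + 1) ^ t := by positivity
  have : (1 : ℝ) ≤ ((2 * s + 1 : ℕ) : ℝ) ^ d * ((t : ℝ) ^ d * q ^ t) := by
    calc (1 : ℝ) ≤ (D : ℝ) ^ t * (((2 * s + 1) * t : ℕ) : ℝ) ^ d / (D + 1) ^ t := by
          rw [one_le_div hpos]; exact_mod_cast hbound
      _ = _ := by simp only [q, div_pow]; push_cast; rw [mul_pow]; ring
  linarith

namespace GridCube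

open scoped Classical

variable {n : ℕ}

def indicatorVec (S : Finset (Fin n)) : Fin n → ℤ := fun i => if i ∈ S then 1 else 0

@[simp]
theorem indicatorVec_apply (S : Finset (Fin n)) (i : Fin n) :
    indicatorVec S i = if i ∈ S then 1 else 0 := rfl

theorem indicatorVec_injective : Function.Injective (indicatorVec (n := n)) := fun S T h => by
  ext i
  have := congrFun h i
  by_cases hS : i ∈ S <;> by_cases hT : i ∈ T <;> simp_all

theorem mem_unitCube_iff_exists_indicatorVec {a x : Fin n → ℤ} {I : Finset (Fin n)} :
    x ∈ unitCube a I ↔ ∃ S ⊆ I, x = a + indicatorVec S := by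
  constructor
  · intro hx
    refine ⟨I.filter (fun i => x i = a i + 1), filter_subset _ _, funext fun i => ?_⟩
    have := hx i
    by_cases hi : i ∈ I <;> simp only [hi, if_true, if_false] at this <;> simp [hi] <;> omega
  · rintro ⟨S, hSI, rfl⟩ i
    by_cases hi : i ∈ I
    · by_cases hiS : i ∈ S <;> simp [hi, hiS]
    · simp [hi, show i ∉ S from fun h => hi (hSI h)]

theorem self_mem_unitCube (a : Fin n → ℤ) (I : Finset (Fin n)) : a ∈ unitCube a I :=
  mem_unitCube_iff_exists_indicatorVec.2 ⟨∅, empty_subset _, by ext; simp⟩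

theorem abs_sub_le_one_of_mem_unitCube {a x : Fin n → ℤ} {I : Finset (Fin n)}
    (hx : x ∈ unitCube a I) (i : Fin n) : |x i - a i| ≤ 1 := by
  have := hx i
  split_ifs at this <;> rw [abs_le] <;> omega

theorem unitCube_finite (a : Fin n → ℤ) (I : Finset (Fin n)) : (unitCube a I).Finite := by
  refine ((I.powerset.image fun S => a + indicatorVec S).finite_toSet).subset fun x hx => ?_
  obtain ⟨S, hSI, rfl⟩ := mem_unitCube_iff_exists_indicatorVec.1 hx
  simpa using ⟨S, hSI, rfl⟩

theorem card_filter_mem_unitCube_le (s : Finset (Fin n → ℤ)) (x : Fin n → ℤ)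
    (I : Finset (Fin n)) :
    #{a ∈ s | x ∈ unitCube a I} ≤ 2 ^ #I := by
  calc #{a ∈ s | x ∈ unitCube a I}
      ≤ #(I.powerset.image fun S => x - indicatorVec S) := by
        refine card_le_card fun a ha => ?_
        obtain ⟨S, hSI, rfl⟩ := mem_unitCube_iff_exists_indicatorVec.1 (mem_filter.1 ha).2
        simpa using ⟨S, hSI, by abel⟩
    _ ≤ 2 ^ #I := card_image_le.trans (card_powerset I).le

theorem mem_unitCube_sub_indicatorVec {I S : Finset (Fin n)} {j : Fin n} (hj : j ∈ I)
    (hS : S ⊆ I.erase j) (u : Fin n → ℤ) :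
    u ∈ unitCube (u - indicatorVec S) I ∧
      u + Pi.single j 1 ∈ unitCube (u - indicatorVec S) I := by
  have hjS : j ∉ S := fun h => by simpa using hS h
  have hSI : S ⊆ I := hS.trans (erase_subset _ _)
  refine ⟨mem_unitCube_iff_exists_indicatorVec.2 ⟨S, hSI, by abel⟩,
    mem_unitCube_iff_exists_indicatorVec.2 ⟨insert j S, insert_subset hj hSI, ?_⟩⟩
  ext i
  by_cases hij : i = j
  · subst hij; simp [hjS]
  · simp [hij]

theorem two_pow_le_card_filter_mem_unitCube {I : Finset (Fin n)} {j : Fin n} (hj : j ∈ I)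
    {s : Finset (Fin n → ℤ)} {u : Fin n → ℤ} (hs : ∀ S ⊆ I.erase j, u - indicatorVec S ∈ s) :
    2 ^ (#I - 1) ≤ #{a ∈ s | u ∈ unitCube a I ∧ u + Pi.single j 1 ∈ unitCube a I} := by
  have hinj : Set.InjOn (fun S => u - indicatorVec S) ↑(I.erase j).powerset :=
    fun _ _ _ _ h => indicatorVec_injective (sub_right_injective h)
  calc 2 ^ (#I - 1) = #((I.erase j).powerset.image fun S => u - indicatorVec S) := by
        rw [card_image_of_injOn hinj, card_powerset, card_erase_of_mem hj]
    _ ≤ _ := by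
        refine card_le_card fun a ha => ?_
        obtain ⟨S, hS, rfl⟩ := mem_image.1 ha
        rw [mem_powerset] at hS
        exact mem_filter.2 ⟨hs S hS, mem_unitCube_sub_indicatorVec hj hS u⟩

noncomputable def box (c : Fin n → ℤ) (r : ℕ) : Finset (Fin n → ℤ) := Icc (c - r) (c + r)

theorem mem_box {c x : Fin n → ℤ} {r : ℕ} : x ∈ box c r ↔ ∀ i, |x i - c i| ≤ r := by
  simp only [box, mem_Icc, Pi.le_def, ← forall_and, abs_sub_le_iff]
  refine forall_congr' fun i => ?_
  simp only [Pi.sub_apply, Pi.add_apply, Pi.natCast_apply]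
  constructor <;> rintro ⟨h1, h2⟩ <;> constructor <;> linarith

theorem card_box (c : Fin n → ℤ) (r : ℕ) : #(box c r) = (2 * r + 1) ^ n := by
  have (i : Fin n) : (c i + r + 1 - (c i - r)).toNat = 2 * r + 1 := by omega
  simp [box, Pi.card_Icc, this]

theorem box_mono (c : Fin n → ℤ) {r s : ℕ} (h : r ≤ s) : box c r ⊆ box c s := fun x hx =>
  mem_box.2 fun i => (mem_box.1 hx i).trans (by exact_mod_cast h)

theorem mem_box_succ {c x y : Fin n → ℤ} {r : ℕ} (hx : x ∈ box c r)
    (hy : ∀ i, |y i - x i| ≤ 1) : y ∈ box c (r + 1) :=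
  mem_box.2 fun i => by
    have := abs_sub_le (y i) (x i) (c i)
    push_cast
    linarith [mem_box.1 hx i, hy i]

theorem grid_adj_abs_sub_le_one {x y : Fin n → ℤ} (h : (grid n).Adj x y) (i : Fin n) :
    |y i - x i| ≤ 1 := by
  rw [abs_sub_comm]
  exact h ▸ single_le_sum (fun i _ => abs_nonneg (x i - y i)) (mem_univ i)

theorem grid_adj_exists_single {x y : Fin n → ℤ} (h : (grid n).Adj x y) :
    ∃ j, y = x + Pi.single j 1 ∨ x = y + Pi.single j 1 := by
  have hsum : ∑ i, |x i - y i| = 1 := h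
  obtain ⟨j, hj⟩ : ∃ j, x j ≠ y j := by
    by_contra! hxy
    simp [hxy] at hsum
  have hrest : ∑ i ∈ univ.erase j, |x i - y i| = 1 - |x j - y j| := by
    rw [← hsum, ← add_sum_erase _ _ (mem_univ j)]; ring
  have hpos : 0 < |x j - y j| := abs_pos.2 (sub_ne_zero.2 hj)
  have hnonneg : 0 ≤ ∑ i ∈ univ.erase j, |x i - y i| := sum_nonneg fun i _ => abs_nonneg _
  have hzero : ∀ i ≠ j, x i = y i := fun i hi => by
    have := (sum_eq_zero_iff_of_nonneg fun i _ => abs_nonneg (x i - y i)).1 (by linarith) i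
      (mem_erase.2 ⟨hi, mem_univ i⟩)
    linarith [abs_eq_zero.1 this]
  refine ⟨j, ?_⟩
  rcases abs_eq (zero_le_one' ℤ) |>.1 (by linarith : |x j - y j| = 1) with h1 | h1
  · right; ext i; by_cases hi : i = j
    · subst hi; simp; linarith
    · simp [hi, hzero i hi]
  · left; ext i; by_cases hi : i = j
    · subst hi; simp; linarith
    · simp [hi, hzero i hi]

theorem injective_sym2_mk_add_single :
    Function.Injective fun q : (Fin n → ℤ) × Fin n => s(q.1, q.1 + Pi.single q.2 1) := by
  rintro ⟨u, j⟩ ⟨v, l⟩ h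
  rcases Sym2.eq_iff.1 h with ⟨rfl, h2⟩ | ⟨h1, h2⟩
  · have := congrFun (add_left_cancel h2) j
    by_cases hjl : l = j
    · simp [hjl]
    · simp [hjl] at this
  · have := congrFun (h1.trans (congrArg (· + Pi.single l 1) h2.symm)) l
    by_cases hjl : l = j
    · subst hjl; simp at this; omega
    · simp [hjl] at this

section Subgraph

variable (H : (grid n).Subgraph)

noncomputable def upEdges (s : Finset (Fin n → ℤ)) (I : Finset (Fin n)) :
    Finset ((Fin n → ℤ) × Fin n) :=
  {q ∈ s ×ˢ I | H.Adj q.1 (q.1 + Pi.single q.2 1)}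

theorem card_upEdges (s : Finset (Fin n → ℤ)) (I : Finset (Fin n)) :
    #(upEdges H s I) = ∑ j ∈ I, #{u ∈ s | H.Adj u (u + Pi.single j 1)} := by
  simp only [upEdges, card_filter, sum_product_right]

variable {H}

theorem card_filter_adj_eq {k : ℕ} (hreg : ∀ v ∈ H.verts, (H.neighborSet v).ncard = k)
    {c v : Fin n → ℤ} {r : ℕ} (hv : v ∈ box c r) (hvH : v ∈ H.verts) :
    #{w ∈ box c (r + 1) | H.Adj v w} = k := by
  rw [← hreg v hvH, ← Set.ncard_coe_finset]
  congr 1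
  ext w
  simpa using fun hvw => mem_box_succ hv (grid_adj_abs_sub_le_one (H.adj_sub hvw))

theorem mul_card_le_two_mul_card_upEdges {k : ℕ}
    (hreg : ∀ v ∈ H.verts, (H.neighborSet v).ncard = k) (c : Fin n → ℤ) (r : ℕ) :
    k * #{v ∈ box c r | v ∈ H.verts} ≤ 2 * #(upEdges H (box c (r + 1)) univ) := by
  set P := upEdges H (box c (r + 1)) univ
  set V := {v ∈ box c r | v ∈ H.verts}
  let incidences := {p ∈ V ×ˢ box c (r + 1) | H.Adj p.1 p.2}
  have hcard : #incidences = k * #V := by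
    rw [card_filter, sum_product, mul_comm, ← smul_eq_mul, ← sum_const]
    refine sum_congr rfl fun v hv => ?_
    rw [← card_filter]
    exact card_filter_adj_eq hreg (mem_filter.1 hv).1 (mem_filter.1 hv).2
  have hsub : incidences ⊆ P.image (fun q => (q.1, q.1 + Pi.single q.2 1)) ∪
      P.image (fun q => (q.1 + Pi.single q.2 1, q.1)) := by
    rintro ⟨v, w⟩ hp
    simp only [incidences, mem_filter, mem_product, V] at hp
    obtain ⟨⟨⟨hv, -⟩, hw⟩, hvw⟩ := hp
    obtain ⟨j, rfl | rfl⟩ := grid_adj_exists_single (H.adj_sub hvw)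
    · refine mem_union_left _ (mem_image.2 ⟨(v, j), ?_, rfl⟩)
      simp [P, upEdges, box_mono c r.le_succ hv, hvw]
    · refine mem_union_right _ (mem_image.2 ⟨(w, j), ?_, rfl⟩)
      simp [P, upEdges, hw, hvw.symm]
  calc k * #V = #incidences := hcard.symm
    _ ≤ #P + #P := (card_le_card hsub).trans <|
      (card_union_le _ _).trans (add_le_add card_image_le card_image_le)
    _ = 2 * #P := (two_mul _).symm

theorem card_filter_upEdges_le_ncard {C : Set (Fin n → ℤ)} (hC : C.Finite)
    (s : Finset (Fin n → ℤ)) (I : Finset (Fin n)) :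
    #{q ∈ upEdges H s I | q.1 ∈ C ∧ q.1 + Pi.single q.2 1 ∈ C} ≤
      {e ∈ H.edgeSet | ∀ v ∈ e, v ∈ C}.ncard := by
  rw [← Set.ncard_coe_finset]
  refine Set.ncard_le_ncard_of_injOn (fun q => s(q.1, q.1 + Pi.single q.2 1)) ?_
    injective_sym2_mk_add_single.injOn ((hC.toFinset.sym2.finite_toSet).subset fun e he => ?_)
  · rintro q hq
    simp only [coe_filter, upEdges, mem_filter] at hq
    refine ⟨hq.1.2, ?_⟩
    simp [hq.2.1, hq.2.2]
  · simpa [Set.mem_sym2_iff_subset, Set.subset_def] using he.2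

theorem two_pow_mul_card_upEdges_le_sum_ncard (c : Fin n → ℤ) (r : ℕ) (I : Finset (Fin n)) :
    2 ^ (#I - 1) * #(upEdges H (box c (r + 1)) I) ≤
      ∑ a ∈ box c (r + 2), {e ∈ H.edgeSet | ∀ v ∈ e, v ∈ unitCube a I}.ncard := by
  set T := upEdges H (box c (r + 1)) I
  let R a (q : (Fin n → ℤ) × Fin n) :=
    q.1 ∈ unitCube a I ∧ q.1 + Pi.single q.2 1 ∈ unitCube a I
  have hbases : ∀ q ∈ T, 2 ^ (#I - 1) ≤ #{a ∈ box c (r + 2) | R a q} := by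
    intro q hq
    simp only [T, upEdges, mem_filter, mem_product] at hq
    refine two_pow_le_card_filter_mem_unitCube hq.1.2 fun S _ =>
      mem_box_succ hq.1.1 fun i => ?_
    by_cases hi : i ∈ S <;> simp [hi]
  calc 2 ^ (#I - 1) * #T ≤ ∑ q ∈ T, #{a ∈ box c (r + 2) | R a q} := by
        rw [mul_comm, ← smul_eq_mul]; exact card_nsmul_le_sum _ _ _ hbases
    _ = ∑ a ∈ box c (r + 2), #{q ∈ T | R a q} :=
        (sum_card_bipartiteAbove_eq_sum_card_bipartiteBelow _).symm
    _ ≤ _ := sum_le_sum fun a _ => card_filter_upEdges_le_ncard (unitCube_finite a I) _ _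

theorem sum_ncard_inter_unitCube_le (c : Fin n → ℤ) (r : ℕ) (I : Finset (Fin n)) :
    ∑ a ∈ box c r, (H.verts ∩ unitCube a I).ncard ≤
      2 ^ #I * #{v ∈ box c (r + 1) | v ∈ H.verts} := by
  set W := {v ∈ box c (r + 1) | v ∈ H.verts}
  have hcube : ∀ a ∈ box c r, H.verts ∩ unitCube a I = ↑{v ∈ W | v ∈ unitCube a I} := by
    intro a ha
    ext v
    simp only [Set.mem_inter_iff, coe_filter, W, mem_filter, Set.mem_ofPred_eq]
    refine ⟨fun ⟨hvH, hv⟩ => ⟨⟨?_, hvH⟩, hv⟩, fun ⟨⟨_, hvH⟩, hv⟩ => ⟨hvH, hv⟩⟩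
    exact mem_box_succ ha (abs_sub_le_one_of_mem_unitCube hv)
  calc ∑ a ∈ box c r, (H.verts ∩ unitCube a I).ncard
      = ∑ a ∈ box c r, #{v ∈ W | v ∈ unitCube a I} :=
        sum_congr rfl fun a ha => by rw [hcube a ha, Set.ncard_coe_finset]
    _ = ∑ v ∈ W, #{a ∈ box c r | v ∈ unitCube a I} :=
        sum_card_bipartiteAbove_eq_sum_card_bipartiteBelow _
    _ ≤ ∑ _v ∈ W, 2 ^ #I := sum_le_sum fun v _ => card_filter_mem_unitCube_le _ v I
    _ = 2 ^ #I * #W := by rw [sum_const, smul_eq_mul, mul_comm]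

theorem exists_card_eq_mul_card_le_sum_ncard {m k : ℕ} (hm : 1 ≤ m) (hmn : m ≤ n)
    (hreg : ∀ v ∈ H.verts, (H.neighborSet v).ncard = k) (c : Fin n → ℤ) (r : ℕ) :
    ∃ I : Finset (Fin n), #I = m ∧ k * m * 2 ^ m * #{v ∈ box c r | v ∈ H.verts} ≤
      4 * n * ∑ a ∈ box c (r + 2), {e ∈ H.edgeSet | ∀ v ∈ e, v ∈ unitCube a I}.ncard := by
  obtain ⟨I, hI, hIsum⟩ := exists_card_eq_mul_sum_le
    (fun j => #{u ∈ box c (r + 1) | H.Adj u (u + Pi.single j 1)}) hm (by simpa using hmn)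
  rw [Fintype.card_fin, ← card_upEdges, ← card_upEdges] at hIsum
  refine ⟨I, hI, ?_⟩
  set P := upEdges H (box c (r + 1)) univ
  set T := upEdges H (box c (r + 1)) I
  have h2m : 2 ^ m = 2 * 2 ^ (m - 1) := by rw [← pow_succ']; congr; omega
  calc k * m * 2 ^ m * #{v ∈ box c r | v ∈ H.verts}
      = 2 * 2 ^ (m - 1) * m * (k * #{v ∈ box c r | v ∈ H.verts}) := by rw [h2m]; ring
    _ ≤ 2 * 2 ^ (m - 1) * m * (2 * #P) :=
        Nat.mul_le_mul_left _ (mul_card_le_two_mul_card_upEdges hreg c r)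
    _ = 4 * 2 ^ (m - 1) * (m * #P) := by ring
    _ ≤ 4 * 2 ^ (m - 1) * (n * #T) := by gcongr
    _ = 4 * n * (2 ^ (#I - 1) * #T) := by rw [hI]; ring
    _ ≤ _ := by gcongr; exact two_pow_mul_card_upEdges_le_sum_ncard c r I

theorem exists_dense_unitCube_of_card_lt {m k : ℕ} (hm : 1 ≤ m) (hmn : m ≤ n)
    (hreg : ∀ v ∈ H.verts, (H.neighborSet v).ncard = k) (c : Fin n → ℤ) {r : ℕ}
    (hr : k * m * 2 ^ m * #{v ∈ box c (r + 3) | v ∈ H.verts} <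
      (k * m * 2 ^ m + 1) * #{v ∈ box c r | v ∈ H.verts}) :
    ∃ (a : Fin n → ℤ) (I : Finset (Fin n)), #I = m ∧ (∃ v ∈ H.verts, v ∈ unitCube a I) ∧
      k * m * (H.verts ∩ unitCube a I).ncard ≤
        4 * n * {e ∈ H.edgeSet | ∀ v ∈ e, v ∈ unitCube a I}.ncard := by
  obtain ⟨I, hI, hedges⟩ := exists_card_eq_mul_card_le_sum_ncard hm hmn hreg c r
  have hverts : k * m * ∑ a ∈ box c (r + 2), (H.verts ∩ unitCube a I).ncard ≤
      k * m * 2 ^ m * #{v ∈ box c (r + 3) | v ∈ H.verts} := by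
    rw [mul_assoc _ (2 ^ m), ← hI]
    exact Nat.mul_le_mul_left _ (sum_ncard_inter_unitCube_le c (r + 2) I)
  -- The `+ 1` slack in `hr` is paid for by the cubes based at vertices of `H`.
  have hbases : #{v ∈ box c r | v ∈ H.verts} ≤
      ∑ a ∈ box c (r + 2), if a ∈ H.verts then 1 else 0 := by
    rw [← card_filter]
    exact card_le_card (filter_subset_filter _ (box_mono c (by omega)))
  obtain ⟨a, -, ha⟩ := exists_lt_of_sum_lt (s := box c (r + 2))
    (f := fun a => k * m * (H.verts ∩ unitCube a I).ncard)
    (g := fun a => 4 * n * {e ∈ H.edgeSet | ∀ v ∈ e, v ∈ unitCube a I}.ncard +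
      if a ∈ H.verts then 1 else 0) <| by
    rw [sum_add_distrib, ← mul_sum, ← mul_sum]
    rw [add_one_mul] at hr
    omega
  refine ⟨a, I, hI, ?_, by split_ifs at ha <;> omega⟩
  by_cases haH : a ∈ H.verts
  · exact ⟨a, haH, self_mem_unitCube a I⟩
  · rw [if_neg haH, add_zero] at ha
    obtain ⟨e, he, he_cube⟩ := Set.nonempty_of_ncard_ne_zero
      (s := {e ∈ H.edgeSet | ∀ v ∈ e, v ∈ unitCube a I}) fun h => by simp [h] at ha
    induction e using Sym2.ind with
    | _ x y => exact ⟨x, H.edge_vert he, he_cube x (Sym2.mem_mk_left x y)⟩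

end Subgraph

end GridCube

open GridCube

theorem exists_dense_unitCube_general (n m k : ℕ) (hm : 1 ≤ m) (hnm : m ≤ n)
    (H : (grid n).Subgraph) (hne : H.verts.Nonempty)
    (hreg : ∀ v ∈ H.verts, (H.neighborSet v).ncard = k) :
    ∃ (a : Fin n → ℤ) (I : Finset (Fin n)), I.card = m ∧
      (∃ v ∈ H.verts, v ∈ unitCube a I) ∧
      ((k : ℝ) * m) / (4 * n) * ((H.verts ∩ unitCube a I).ncard : ℝ)
        ≤ ({e ∈ H.edgeSet | ∀ v ∈ e, v ∈ unitCube a I}.ncard : ℝ) := by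
  classical
  obtain ⟨c, hc⟩ := hne
  have hc_box : c ∈ {v ∈ box c 0 | v ∈ H.verts} := mem_filter.2 ⟨mem_box.2 (by simp), hc⟩
  obtain ⟨r, hr⟩ :=
    exists_mul_lt_succ_mul_of_le_pow (A := fun r => #{v ∈ box c r | v ∈ H.verts})
      (card_pos.2 ⟨c, hc_box⟩) (fun r => (card_filter_le _ _).trans (card_box c r).le)
      (k * m * 2 ^ m) 3
  obtain ⟨a, I, hI, hmeets, hdense⟩ := exists_dense_unitCube_of_card_lt hm hnm hreg c hr
  refine ⟨a, I, hI, hmeets, ?_⟩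
  rw [div_mul_eq_mul_div, div_le_iff₀ (by exact_mod_cast (by omega : 0 < 4 * n))]
  exact_mod_cast hdense.trans_eq (mul_comm _ _)

theorem exists_dense_unitCube (n m k : ℕ) (hm : 1 ≤ m) (hnm : m ≤ n) (hk : k ≤ 2 * n)
    (H : (grid n).Subgraph) (hne : H.verts.Nonempty)
    (hreg : ∀ v ∈ H.verts, (H.neighborSet v).ncard = k) :
    ∃ (a : Fin n → ℤ) (I : Finset (Fin n)), I.card = m ∧
      (∃ v ∈ H.verts, v ∈ unitCube a I) ∧
      ((k : ℝ) * m) / (4 * n) * ((H.verts ∩ unitCube a I).ncard : ℝ)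
        ≤ ({e ∈ H.edgeSet | ∀ v ∈ e, v ∈ unitCube a I}.ncard : ℝ) :=
  exists_dense_unitCube_general n m k hm hnm H hne hreg
end

section
/- Let Γ be a 6-regular induced subgraph of the 6-dimensional grid, and suppose there exists a vertex u of Γ and a neighbour v of u in Γ such that the antipodal point 2u − v is not in the vertex set of Γ (i.e., the neighbours of u do not match up in antipodal pairs). Then the girth of Γ is at most 6. -/
open Finset

lemma Finset.card_add_card_le_card_add_card_inter {α : Type*} [DecidableEq α] {s t u : Finset α}
    (hs : s ⊆ u) (ht : t ⊆ u) : #s + #t ≤ #u + #(s ∩ t) := by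
  rw [← card_union_add_card_inter]
  gcongr
  exact union_subset hs ht

namespace SimpleGraph

variable {V : Type*} {G : SimpleGraph V}

lemma egirth_le_length_add_one_of_isPath {a b : V} (h : G.Adj a b) {p : G.Walk b a}
    (hp : p.IsPath) (hl : 2 ≤ p.length) : G.egirth ≤ p.length + 1 := by
  have hc : (Walk.cons h p).IsCycle :=
    Walk.isCycle_iff_isPath_tail_and_le_length.mpr ⟨by simpa using hp, by simp; omega⟩
  simpa using egirth_le_length hc

end SimpleGraph

namespace Grid

abbrev Dir (n : ℕ) := Fin n × ℤˣ

variable {n k : ℕ} {S : Set (Fin n → ℤ)} {x u : Fin n → ℤ} {e : Dir n}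

def dirVec (d : Dir n) : Fin n → ℤ := Pi.single d.1 (d.2 : ℤ)

lemma dirVec_injective : Function.Injective (dirVec (n := n)) := by
  rintro ⟨i, σ⟩ ⟨j, τ⟩ h
  have hi := congrFun h i
  by_cases hij : i = j
  · subst hij
    simpa [dirVec, Units.ext_iff] using hi
  · simp [dirVec, hij] at hi

lemma dirVec_neg (i : Fin n) (σ : ℤˣ) : dirVec (i, -σ) = -dirVec (i, σ) := by
  simp [dirVec, Pi.single_neg]

lemma eq_or_eq_neg_of_fst_eq {d e : Dir n} (h : d.1 = e.1) : d = e ∨ d = (e.1, -e.2) := by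
  obtain ⟨i, σ⟩ := d
  obtain ⟨j, τ⟩ := e
  obtain rfl : i = j := h
  rcases Int.units_eq_one_or σ with rfl | rfl <;> rcases Int.units_eq_one_or τ with rfl | rfl <;>
    simp

lemma card_filter_fst_eq_le_two (D : Finset (Dir n)) (i : Fin n) : #(D.filter (·.1 = i)) ≤ 2 :=
  calc #(D.filter (·.1 = i)) ≤ #({i} ×ˢ (univ : Finset ℤˣ)) :=
        card_le_card fun d hd =>
          mem_product.mpr ⟨mem_singleton.mpr (mem_filter.mp hd).2, mem_univ _⟩
    _ = 2 := by simp

lemma card_le_card_filter_fst_ne_add_two (D : Finset (Dir n)) (i : Fin n) :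
    #D ≤ #(D.filter (·.1 ≠ i)) + 2 := by
  rw [← card_filter_add_card_filter_not (s := D) (·.1 = i)]
  have := card_filter_fst_eq_le_two D i
  simp only [ne_eq]
  omega

lemma grid_adj_add_dirVec (x : Fin n → ℤ) (d : Dir n) : (grid n).Adj x (x + dirVec d) := by
  show ∑ i, |x i - (x + dirVec d) i| = 1
  simp [dirVec, Pi.single_apply, apply_ite, ← Int.isUnit_iff_abs_eq]

lemma grid_adj_iff {x y : Fin n → ℤ} : (grid n).Adj x y ↔ ∃ d, y = x + dirVec d := by
  refine ⟨fun h => ?_, by rintro ⟨d, rfl⟩; exact grid_adj_add_dirVec x d⟩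
  replace h : ∑ i, |(y - x) i| = 1 := by
    change ∑ i, |x i - y i| = 1 at h
    simpa [abs_sub_comm] using h
  obtain ⟨i, hi⟩ : ∃ i, (y - x) i ≠ 0 := by
    by_contra! h0
    simp [h0] at h
  have hsplit := add_sum_erase univ (fun j => |(y - x) j|) (mem_univ i)
  have hrest : ∑ j ∈ univ.erase i, |(y - x) j| = 0 := by
    have := abs_pos.mpr hi
    have := sum_nonneg fun j (_ : j ∈ univ.erase i) => abs_nonneg ((y - x) j)
    omega
  have hunit : |(y - x) i| = 1 := by omega
  refine ⟨(i, (Int.isUnit_iff_abs_eq.mpr hunit).unit), ?_⟩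
  rw [← sub_eq_iff_eq_add']
  funext j
  by_cases hj : j = i
  · subst hj; simp [dirVec]
  · have := (sum_eq_zero_iff_of_nonneg fun k _ => abs_nonneg ((y - x) k)).mp hrest j (by simp [hj])
    simpa [dirVec, hj] using this

lemma induce_adj_of_eq_add {y z : Fin n → ℤ} {hy : y ∈ S} {hz : z ∈ S} (d : Dir n)
    (h : z = y + dirVec d) : ((grid n).induce S).Adj ⟨y, hy⟩ ⟨z, hz⟩ :=
  grid_adj_iff.mpr ⟨d, h⟩

lemma egirth_induce_le_four {a b : Dir n} (hab : a.1 ≠ b.1) (h₀ : x ∈ S)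
    (ha : x + dirVec a ∈ S) (hab' : x + dirVec a + dirVec b ∈ S) (hb : x + dirVec b ∈ S) :
    ((grid n).induce S).egirth ≤ 4 := by
  let p : ((grid n).induce S).Walk ⟨_, ha⟩ ⟨x, h₀⟩ :=
    .cons (induce_adj_of_eq_add (hz := hab') b rfl) <|
    .cons (induce_adj_of_eq_add (hy := hb) a (add_right_comm _ _ _)).symm <|
    .cons (induce_adj_of_eq_add (hz := hb) b rfl).symm .nil
  have hp : p.IsPath := by
    refine .mk' (.of_map Subtype.val ?_)
    simp [p]
    and_intros <;> intro h <;> have ha := congrFun h a.1 <;> have hb := congrFun h b.1 <;>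
      simp [dirVec, hab] at ha hb
  exact SimpleGraph.egirth_le_length_add_one_of_isPath (induce_adj_of_eq_add a rfl) hp
    (by simp [p])

lemma egirth_induce_le_six {a b c : Dir n} (hab : a.1 ≠ b.1) (hac : a.1 ≠ c.1)
    (hbc : b.1 ≠ c.1)
    (h₀ : x ∈ S) (h₁ : x + dirVec a ∈ S) (h₂ : x + dirVec a + dirVec b ∈ S)
    (h₃ : x + dirVec a + dirVec b + dirVec c ∈ S) (h₄ : x + dirVec b + dirVec c ∈ S)
    (h₅ : x + dirVec c ∈ S) :
    ((grid n).induce S).egirth ≤ 6 := by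
  let p : ((grid n).induce S).Walk ⟨_, h₁⟩ ⟨x, h₀⟩ :=
    .cons (induce_adj_of_eq_add (hz := h₂) b rfl) <|
    .cons (induce_adj_of_eq_add (hz := h₃) c rfl) <|
    .cons (induce_adj_of_eq_add (hy := h₄) a (by abel)).symm <|
    .cons (induce_adj_of_eq_add (hy := h₅) b (add_right_comm _ _ _)).symm <|
    .cons (induce_adj_of_eq_add (hz := h₅) c rfl).symm .nil
  have hp : p.IsPath := by
    refine .mk' (.of_map Subtype.val ?_)
    simp [p]
    and_intros <;> intro h <;> have ha := congrFun h a.1 <;> have hb := congrFun h b.1 <;>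
      have hc := congrFun h c.1 <;>
      simp [dirVec, hab, hac, hbc, hab.symm] at ha hb hc
  exact SimpleGraph.egirth_le_length_add_one_of_isPath (induce_adj_of_eq_add a rfl) hp
    (by simp [p])

open scoped Classical

noncomputable def dirsIn (S : Set (Fin n → ℤ)) (x : Fin n → ℤ) : Finset (Dir n) :=
  univ.filter fun d => x + dirVec d ∈ S

@[simp] lemma mem_dirsIn {d : Dir n} : d ∈ dirsIn S x ↔ x + dirVec d ∈ S := by
  simp [dirsIn]

lemma card_dirsIn (hreg : IsRegularInduced n S k) (hx : x ∈ S) : #(dirsIn S x) = k := by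
  let step : Dir n ↪ (Fin n → ℤ) :=
    ⟨(x + dirVec ·), fun _ _ h => dirVec_injective (add_left_cancel h)⟩
  have himage : Subtype.val '' ((grid n).induce S).neighborSet ⟨x, hx⟩ =
      ((dirsIn S x).map step : Set _) := by
    ext y
    simp only [Set.mem_image, SimpleGraph.mem_neighborSet, SimpleGraph.induce_adj, coe_map,
      mem_coe, mem_dirsIn]
    constructor
    · rintro ⟨⟨y, hy⟩, hadj, rfl⟩
      obtain ⟨d, rfl⟩ := grid_adj_iff.mp hadj
      exact ⟨d, hy, rfl⟩
    · rintro ⟨d, hd, rfl⟩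
      exact ⟨⟨_, hd⟩, grid_adj_add_dirVec x d, rfl⟩
  rw [← hreg ⟨x, hx⟩, ← Set.ncard_image_of_injective _ Subtype.val_injective, himage,
    Set.ncard_coe_finset, card_map]

lemma card_compl_dirsIn (hreg : IsRegularInduced n S k) (hx : x ∈ S) :
    #(dirsIn S x)ᶜ + k = 2 * n := by
  have hle := card_le_univ (dirsIn S x)
  rw [card_compl, card_dirsIn hreg hx] at *
  simp only [Fintype.card_prod, Fintype.card_fin, Fintype.card_units_int] at *
  omega

lemma add_add_notMem_of_four_lt_egirth (hg : 4 < ((grid n).induce S).egirth) {a b : Dir n}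
    (hab : a.1 ≠ b.1) (hx : x ∈ S) (ha : x + dirVec a ∈ S) (hb : x + dirVec b ∈ S) :
    x + dirVec a + dirVec b ∉ S :=
  fun hab' => (egirth_induce_le_four hab hx ha hab' hb).not_gt hg

lemma filter_fst_ne_dirsIn_subset_compl (hg : 4 < ((grid n).induce S).egirth) {a : Dir n}
    (hx : x ∈ S) (ha : x + dirVec a ∈ S) :
    (dirsIn S (x + dirVec a)).filter (·.1 ≠ a.1) ⊆ (dirsIn S x)ᶜ := by
  intro d hd
  rw [mem_filter, mem_dirsIn] at hd
  rw [mem_compl, mem_dirsIn]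
  exact fun hd' => add_add_notMem_of_four_lt_egirth hg hd.2.symm hx ha hd' hd.1

lemma card_filter_fst_ne_dirsIn_add_one (hreg : IsRegularInduced n S k) (hu : u ∈ S)
    (hv : u + dirVec e ∈ S) (hanti : u - dirVec e ∉ S) :
    #((dirsIn S u).filter (·.1 ≠ e.1)) + 1 = k := by
  have hfst : (dirsIn S u).filter (·.1 = e.1) = {e} := by
    ext d
    simp only [mem_filter, mem_dirsIn, mem_singleton]
    refine ⟨fun ⟨hd, hde⟩ => (eq_or_eq_neg_of_fst_eq hde).resolve_right ?_,
      by rintro rfl; exact ⟨hv, rfl⟩⟩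
    rintro rfl
    exact hanti (by simpa [dirVec_neg, sub_eq_add_neg] using hd)
  rw [← card_dirsIn hreg hu, ← card_filter_add_card_filter_not (s := dirsIn S u) (·.1 = e.1),
    hfst, card_singleton, add_comm]

lemma le_card_filter_add_add_mem (hg : 4 < ((grid n).induce S).egirth)
    (hreg : IsRegularInduced n S k)
    (hu : u ∈ S) (hv : u + dirVec e ∈ S) (hanti : u - dirVec e ∉ S) {d : Dir n}
    (hd : d ∈ dirsIn S u) :
    2 * k + #((dirsIn S (u + dirVec e)).filter (·.1 ≠ e.1)) ≤
      2 * n + 2 + #(((dirsIn S (u + dirVec e)).filter (·.1 ≠ e.1)).filter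
        (fun c => u + dirVec d + dirVec c ∈ S)) := by
  set C := (dirsIn S (u + dirVec e)).filter (·.1 ≠ e.1)
  set X := (dirsIn S (u + dirVec d)).filter (·.1 ≠ d.1)
  let e' : Dir n := (e.1, -e.2)
  have he' : e' ∉ C := by simp [C, e']
  have hX : X ⊆ (dirsIn S u)ᶜ := filter_fst_ne_dirsIn_subset_compl hg hu (mem_dirsIn.mp hd)
  have hY : insert e' C ⊆ (dirsIn S u)ᶜ := by
    refine insert_subset (by simpa [e', dirVec_neg, ← sub_eq_add_neg] using hanti) fun c hc => ?_
    rw [mem_filter, mem_dirsIn] at hc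
    exact mem_compl.mpr fun hc' => add_add_notMem_of_four_lt_egirth hg (Ne.symm hc.2) hu hv
      (mem_dirsIn.mp hc') hc.1
  have hXY : X ∩ insert e' C ⊆ insert e' (C.filter fun c => u + dirVec d + dirVec c ∈ S) := by
    intro c hc
    rw [mem_inter, mem_insert] at hc
    rw [mem_insert, mem_filter]
    rcases hc with ⟨hcX, rfl | hcC⟩
    · exact Or.inl rfl
    · exact Or.inr ⟨hcC, mem_dirsIn.mp (mem_filter.mp hcX).1⟩
  have hXk : k ≤ #X + 2 := by
    simpa only [card_dirsIn hreg (mem_dirsIn.mp hd)] using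
      card_le_card_filter_fst_ne_add_two (dirsIn S (u + dirVec d)) d.1
  have := card_add_card_le_card_add_card_inter hX hY
  have := (card_le_card hXY).trans (card_insert_le _ _)
  have := card_compl_dirsIn hreg hu
  rw [card_insert_of_notMem he'] at *
  omega

lemma card_filter_add_add_mem_le (hg : 6 < ((grid n).induce S).egirth)
    (hreg : IsRegularInduced n S k)
    (hu : u ∈ S) (hv : u + dirVec e ∈ S) (hanti : u - dirVec e ∉ S) {c : Dir n}
    (hc : c ∈ (dirsIn S (u + dirVec e)).filter (·.1 ≠ e.1)) :
    #(((dirsIn S u).filter (·.1 ≠ e.1)).filter fun d => u + dirVec d + dirVec c ∈ S) + 2 * k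
      ≤ 2 * n + 2 := by
  have hg4 : 4 < ((grid n).induce S).egirth := lt_trans (by norm_num) hg
  set A := (dirsIn S u).filter (·.1 ≠ e.1)
  set X := (dirsIn S (u + dirVec e + dirVec c)).filter (·.1 ≠ c.1)
  rw [mem_filter, mem_dirsIn] at hc
  have hX : X ⊆ (dirsIn S (u + dirVec e))ᶜ := filter_fst_ne_dirsIn_subset_compl hg4 hv hc.1
  have hA : A ⊆ (dirsIn S (u + dirVec e))ᶜ := by
    intro a ha
    rw [mem_filter, mem_dirsIn] at ha
    exact mem_compl.mpr fun ha' => add_add_notMem_of_four_lt_egirth hg4 (Ne.symm ha.2) hu hv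
      ha.1 (mem_dirsIn.mp ha')
  have hXA : X ∩ A ⊆ A.filter (fun d => u + dirVec d + dirVec c ∉ S) := by
    intro a ha
    obtain ⟨haX, haA⟩ := mem_inter.mp ha
    obtain ⟨ha₃, hac⟩ := mem_filter.mp haX
    obtain ⟨ha₅, hae⟩ := mem_filter.mp haA
    refine mem_filter.mpr ⟨haA, fun h₄ => ?_⟩
    rw [add_right_comm] at h₄
    exact (egirth_induce_le_six hc.2.symm hae.symm hac.symm hu hv hc.1 (mem_dirsIn.mp ha₃) h₄
      (mem_dirsIn.mp ha₅)).not_gt hg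
  have hXk : k ≤ #X + 2 := by
    simpa only [card_dirsIn hreg hc.1] using
      card_le_card_filter_fst_ne_add_two (dirsIn S (u + dirVec e + dirVec c)) c.1
  have := card_add_card_le_card_add_card_inter hX hA
  have := card_le_card hXA
  have := card_compl_dirsIn hreg hv
  have := card_filter_fst_ne_dirsIn_add_one hreg hu hv hanti
  have := card_filter_add_card_filter_not (s := A) (fun d => u + dirVec d + dirVec c ∈ S)
  omega

theorem egirth_induce_le_six_of_sub_notMem (hn : 6 ≤ n) (hreg : IsRegularInduced n S n)
    (hu : u ∈ S) (hv : u + dirVec e ∈ S) (hanti : u - dirVec e ∉ S) :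
    ((grid n).induce S).egirth ≤ 6 := by
  by_contra! hg
  set A := (dirsIn S u).filter (·.1 ≠ e.1)
  set C := (dirsIn S (u + dirVec e)).filter (·.1 ≠ e.1)
  have hA : #A + 1 = n := card_filter_fst_ne_dirsIn_add_one hreg hu hv hanti
  have hC : n ≤ #C + 2 := by
    have := card_le_card_filter_fst_ne_add_two (dirsIn S (u + dirVec e)) e.1
    rwa [card_dirsIn hreg hv] at this
  let r (d c : Dir n) : Prop := u + dirVec d + dirVec c ∈ S
  have hcount : #A * (#C - 2) ≤ #C * 2 :=
    card_mul_le_card_mul r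
      (fun d hd => by
        have : 2 * n + #C ≤ 2 * n + 2 + #(C.bipartiteAbove r d) :=
          le_card_filter_add_add_mem (lt_trans (by norm_num) hg) hreg hu hv hanti
            (mem_filter.mp hd).1
        omega)
      (fun c hc => by
        have : #(A.bipartiteBelow r c) + 2 * n ≤ 2 * n + 2 :=
          card_filter_add_add_mem_le hg hreg hu hv hanti hc
        omega)
  have : 5 * (#C - 2) ≤ #A * (#C - 2) := Nat.mul_le_mul_right _ (by omega)
  omega

end Grid

theorem girth_le_six_of_not_antipodal (S : Set (Fin 6 → ℤ))
    (hreg : IsRegularInduced 6 S 6)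
    (u v : Fin 6 → ℤ) (hu : u ∈ S) (hv : v ∈ S) (hadj : (grid 6).Adj u v)
    (hanti : (fun i => 2 * u i - v i) ∉ S) :
    ((grid 6).induce S).egirth ≤ 6 := by
  obtain ⟨e, rfl⟩ := Grid.grid_adj_iff.mp hadj
  refine Grid.egirth_induce_le_six_of_sub_notMem le_rfl hreg hu hv fun h => hanti ?_
  convert h using 1
  funext i
  simp only [Pi.add_apply, Pi.sub_apply]
  ring
end

section
/- Let n be an integer with n = 5 or n ≥ 7. Then every nonempty n-regular induced subgraph of the n-dimensional grid has girth at most 6. -/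
/-!
Suppose the induced graph on `S` is `n`-regular of girth greater than 6, so that `S` contains
no unit square and no hexagon `x, x+a, x+a+b, x+a+b+c, x+c+b, x+c` with `a, b, c` on distinct axes.
Fix `v ∈ S` and let `D` be the `n` unit directions leading from `v` into `S`. For `b ∉ D`, a first
step `a ∈ D` with `a ≠ -b` *witnesses* `b` if `v+a+b ∈ S` and *misses* it otherwise; a *gap*
of `a ∈ D` is a second step `c ∈ {a} ∪ Dᶜ` with `v+a+c ∉ S`.

Regularity at `v+a` and the absence of squares leave every `a ∈ D` at most one gap, or two
if `-a ∈ D`. If `a` misses `b`, then `b` is a gap of `a`, so double counting gives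
`∑_{b ∉ D} #misses(b) ≤ n + #{a ∈ D | -a ∈ D} ≤ 2n`. On the other hand, regularity at a vertex
`v+a+b` with `a` witnessing `b`, together with the absence of squares and hexagons, shows that
every `b ∉ D` has at least `n - 4` misses. For `n ≥ 7` this contradicts `n (n - 4) ≤ 2n`.
For `n = 5`, equality in these estimates forces the witnesses of `b` to come in pairs `±a`, and
a parity argument raises the bound to two misses; then `2n ≤ n + #{a ∈ D | -a ∈ D}` contradicts
the evenness of `#{a ∈ D | -a ∈ D}`.
-/

open Finset

namespace SimpleGraph

variable {α : Type*} {G : SimpleGraph α}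

lemma egirth_le_four {a b c d : α} (hab : G.Adj a b) (hbc : G.Adj b c) (hcd : G.Adj c d)
    (hda : G.Adj d a) (hac : a ≠ c) (hbd : b ≠ d) : G.egirth ≤ 4 := by
  have := hab.ne; have := hbc.ne; have := hcd.ne; have := hda.ne
  set w : G.Walk a a := .cons hab (.cons hbc (.cons hcd (.cons hda .nil))) with hw
  have : w.IsCycle :=
    { edges_nodup := by aesop
      ne_nil := by aesop
      support_nodup := by aesop }
  grw [egirth_le_length this]
  simp [hw]

lemma egirth_le_six {a b c d e f : α} (hab : G.Adj a b) (hbc : G.Adj b c) (hcd : G.Adj c d)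
    (hde : G.Adj d e) (hef : G.Adj e f) (hfa : G.Adj f a)
    (hac : a ≠ c) (had : a ≠ d) (hae : a ≠ e) (hbd : b ≠ d) (hbe : b ≠ e) (hbf : b ≠ f)
    (hce : c ≠ e) (hcf : c ≠ f) (hdf : d ≠ f) : G.egirth ≤ 6 := by
  have := hab.ne; have := hbc.ne; have := hcd.ne; have := hde.ne; have := hef.ne; have := hfa.ne
  set w : G.Walk a a := .cons hab (.cons hbc (.cons hcd (.cons hde (.cons hef (.cons hfa .nil)))))
    with hw
  have : w.IsCycle :=
    { edges_nodup := by aesop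
      ne_nil := by aesop
      support_nodup := by aesop }
  grw [egirth_le_length this]
  simp [hw]

end SimpleGraph

lemma Subtype.mk_ne_mk_of_apply_ne {ι β : Type*} {S : Set (ι → β)} {p q : ι → β} {hp : p ∈ S}
    {hq : q ∈ S} (i : ι) (h : p i ≠ q i) : (⟨p, hp⟩ : S) ≠ ⟨q, hq⟩ :=
  fun e => h (congrFun (congrArg Subtype.val e) i)

namespace Grid

namespace Dir

variable {n : ℕ}

def vec (d : Dir n) : Fin n → ℤ := Pi.single d.1 d.2

def rev (d : Dir n) : Dir n := (d.1, -d.2)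

@[simp] lemma rev_rev (d : Dir n) : d.rev.rev = d := by simp [rev]

lemma rev_injective : Function.Injective (rev : Dir n → Dir n) :=
  Function.LeftInverse.injective rev_rev

lemma rev_ne_self (d : Dir n) : d.rev ≠ d := fun h =>
  Int.units_ne_iff_eq_neg.mpr rfl (congrArg Prod.snd h)

@[simp] lemma add_vec_add_vec_rev (x : Fin n → ℤ) (d : Dir n) : x + d.vec + d.rev.vec = x := by
  simp [vec, rev, Pi.single_neg]

lemma eq_or_eq_rev_of_fst_eq {d e : Dir n} (h : d.1 = e.1) : d = e ∨ d = e.rev := by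
  rcases Int.units_eq_one_or d.2 with hd | hd <;> rcases Int.units_eq_one_or e.2 with he | he <;>
    simp [rev, Prod.ext_iff, h, hd, he]

lemma vec_injective : Function.Injective (vec : Dir n → Fin n → ℤ) := by
  intro d e h
  have h' := congrFun h d.1
  by_cases hde : d.1 = e.1
  · simp only [vec, hde, Pi.single_eq_same, Units.val_inj] at h'
    exact Prod.ext hde h'
  · simp [vec, hde] at h'

lemma even_card_of_rev_mem {F : Finset (Dir n)} (hF : ∀ d ∈ F, d.rev ∈ F) : Even #F := by
  have h : #{d ∈ F | d.2 = 1} = #{d ∈ F | ¬d.2 = 1} := by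
    refine card_bij' (fun d _ => d.rev) (fun d _ => d.rev) ?_ ?_ (fun d _ => d.rev_rev)
      (fun d _ => d.rev_rev)
    · intro d hd
      obtain ⟨hdF, hd1⟩ := mem_filter.mp hd
      exact mem_filter.mpr ⟨hF d hdF, by simp [rev, hd1]⟩
    · intro d hd
      obtain ⟨hdF, hd1⟩ := mem_filter.mp hd
      exact mem_filter.mpr ⟨hF d hdF, by simp_all [rev, Int.units_ne_iff_eq_neg]⟩
  rw [← card_filter_add_card_filter_not (s := F) (fun d : Dir n => d.2 = 1), h]
  exact ⟨_, rfl⟩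

lemma even_card_filter_rev_mem (F : Finset (Dir n)) : Even #{d ∈ F | d.rev ∈ F} :=
  even_card_of_rev_mem fun d hd => by
    simp only [mem_filter, rev_rev] at hd ⊢
    exact hd.symm

end Dir

variable {n : ℕ}

lemma card_dir : Fintype.card (Dir n) = 2 * n := by simp [mul_comm]

lemma adj_iff {x y : Fin n → ℤ} : (grid n).Adj x y ↔ ∃ d : Dir n, y = x + d.vec := by
  constructor
  · intro h
    obtain ⟨z, rfl⟩ : ∃ z, y = x + z := ⟨y - x, by abel⟩
    replace h : ∑ j, |z j| = 1 := by simpa [grid] using h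
    have hle : ∀ j, |z j| ≤ 1 := fun j =>
      h ▸ single_le_sum (fun j _ => abs_nonneg (z j)) (mem_univ j)
    obtain ⟨i, hi⟩ : ∃ i, z i ≠ 0 := by
      by_contra! hz
      simp [hz] at h
    have hzi : |z i| = 1 := le_antisymm (hle i) (Int.one_le_abs hi)
    have hzj : ∀ j ≠ i, z j = 0 := by
      intro j hj
      have := sum_le_sum_of_subset_of_nonneg (subset_univ {i, j}) fun k _ _ => abs_nonneg (z k)
      rw [sum_pair hj.symm, h, hzi] at this
      exact abs_nonpos_iff.mp (by linarith)
    refine ⟨(i, (Int.isUnit_iff_abs_eq.mpr hzi).unit), ?_⟩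
    ext j
    by_cases hj : j = i
    · simp [Dir.vec, hj]
    · simp [Dir.vec, hj, hzj j hj]
  · rintro ⟨d, rfl⟩
    show ∑ i, |x i - (x + d.vec) i| = 1
    simpa [Dir.vec, Pi.single_apply, apply_ite] using Int.isUnit_iff_abs_eq.mp d.2.isUnit

lemma adj_add_vec (x : Fin n → ℤ) (d : Dir n) : (grid n).Adj x (x + d.vec) :=
  adj_iff.mpr ⟨d, rfl⟩

def SquareFree (S : Set (Fin n → ℤ)) : Prop :=
  ∀ ⦃x : Fin n → ℤ⦄ ⦃a b : Dir n⦄, a.1 ≠ b.1 → x ∈ S → x + a.vec ∈ S → x + b.vec ∈ S →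
    x + a.vec + b.vec ∉ S

def HexagonFree (S : Set (Fin n → ℤ)) : Prop :=
  ∀ ⦃x : Fin n → ℤ⦄ ⦃a b c : Dir n⦄, a.1 ≠ b.1 → a.1 ≠ c.1 → b.1 ≠ c.1 → x ∈ S →
    x + a.vec ∈ S → x + a.vec + b.vec ∈ S → x + a.vec + b.vec + c.vec ∈ S → x + c.vec ∈ S →
    x + c.vec + b.vec ∉ S

variable {S : Set (Fin n → ℤ)}

lemma squareFree_of_four_lt_egirth (h : 4 < ((grid n).induce S).egirth) : SquareFree S := by
  intro x a b hab hx ha hb habS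
  have hba : (grid n).Adj (x + a.vec + b.vec) (x + b.vec) := (adj_iff.mpr ⟨a, by abel⟩).symm
  refine h.not_ge (SimpleGraph.egirth_le_four (a := ⟨x, hx⟩) (b := ⟨_, ha⟩) (c := ⟨_, habS⟩)
    (d := ⟨_, hb⟩) (adj_add_vec x a) (adj_add_vec _ b) hba (adj_add_vec x b).symm
    (Subtype.mk_ne_mk_of_apply_ne a.1 ?_) (Subtype.mk_ne_mk_of_apply_ne a.1 ?_))
  all_goals simp [Dir.vec, hab]

lemma hexagonFree_of_six_lt_egirth (h : 6 < ((grid n).induce S).egirth) : HexagonFree S := by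
  intro x a b c hab hac hbc hx ha hab' habc hc hcb
  have h34 : (grid n).Adj (x + a.vec + b.vec + c.vec) (x + c.vec + b.vec) :=
    (adj_iff.mpr ⟨a, by abel⟩).symm
  have := hab.symm; have := hac.symm; have := hbc.symm
  refine h.not_ge (SimpleGraph.egirth_le_six (a := ⟨x, hx⟩) (b := ⟨_, ha⟩) (c := ⟨_, hab'⟩)
    (d := ⟨_, habc⟩) (e := ⟨_, hcb⟩) (f := ⟨_, hc⟩) (adj_add_vec x a) (adj_add_vec _ b)
    (adj_add_vec _ c) h34 (adj_add_vec _ b).symm (adj_add_vec x c).symm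
    (Subtype.mk_ne_mk_of_apply_ne a.1 ?_) (Subtype.mk_ne_mk_of_apply_ne a.1 ?_)
    (Subtype.mk_ne_mk_of_apply_ne b.1 ?_) (Subtype.mk_ne_mk_of_apply_ne b.1 ?_)
    (Subtype.mk_ne_mk_of_apply_ne a.1 ?_) (Subtype.mk_ne_mk_of_apply_ne a.1 ?_)
    (Subtype.mk_ne_mk_of_apply_ne a.1 ?_) (Subtype.mk_ne_mk_of_apply_ne a.1 ?_)
    (Subtype.mk_ne_mk_of_apply_ne a.1 ?_))
  all_goals simp [Dir.vec, *]

section Counting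

open scoped Classical

variable {x v : Fin n → ℤ} {a b c d : Dir n}

noncomputable def steps (S : Set (Fin n → ℤ)) (x : Fin n → ℤ) : Finset (Dir n) :=
  {d | x + d.vec ∈ S}

@[simp] lemma mem_steps : d ∈ steps S x ↔ x + d.vec ∈ S := by simp [steps]

lemma card_steps {k : ℕ} (hreg : IsRegularInduced n S k) (hx : x ∈ S) : #(steps S x) = k := by
  rw [← hreg ⟨x, hx⟩, ← Set.ncard_coe_finset]
  refine Set.ncard_congr (fun d hd => ⟨x + d.vec, by simpa using hd⟩) (fun d _ => ?_)
    (fun d e _ _ h => Dir.vec_injective (add_left_cancel (congrArg Subtype.val h))) ?_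
  · exact adj_add_vec x d
  · rintro ⟨y, hy⟩ hadj
    obtain ⟨d, rfl⟩ := adj_iff.mp hadj
    exact ⟨d, by simpa using hy, rfl⟩

lemma card_compl_steps (h : #(steps S x) = n) : #(steps S x)ᶜ = n := by
  rw [card_compl, card_dir, h]
  omega

noncomputable def witnesses (S : Set (Fin n → ℤ)) (v : Fin n → ℤ) (b : Dir n) : Finset (Dir n) :=
  {a ∈ (steps S v).erase b.rev | v + a.vec + b.vec ∈ S}

noncomputable def misses (S : Set (Fin n → ℤ)) (v : Fin n → ℤ) (b : Dir n) : Finset (Dir n) :=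
  {a ∈ (steps S v).erase b.rev | v + a.vec + b.vec ∉ S}

noncomputable def gaps (S : Set (Fin n → ℤ)) (v : Fin n → ℤ) (a : Dir n) : Finset (Dir n) :=
  {c ∈ insert a (steps S v)ᶜ | v + a.vec + c.vec ∉ S}

@[simp] lemma mem_witnesses :
    a ∈ witnesses S v b ↔ a ∈ steps S v ∧ a ≠ b.rev ∧ v + a.vec + b.vec ∈ S := by
  simp [witnesses, and_assoc, and_comm (a := a ≠ b.rev)]

@[simp] lemma mem_misses :
    a ∈ misses S v b ↔ a ∈ steps S v ∧ a ≠ b.rev ∧ v + a.vec + b.vec ∉ S := by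
  simp [misses, and_assoc, and_comm (a := a ≠ b.rev)]

@[simp] lemma mem_gaps :
    b ∈ gaps S v a ↔ (b = a ∨ b ∉ steps S v) ∧ v + a.vec + b.vec ∉ S := by
  simp [gaps]

lemma card_witnesses_add_card_misses (S : Set (Fin n → ℤ)) (v : Fin n → ℤ) (b : Dir n) :
    #(witnesses S v b) + #(misses S v b) = #((steps S v).erase b.rev) :=
  card_filter_add_card_filter_not _

lemma card_gaps_le (hdeg : ∀ x ∈ S, #(steps S x) = n) (hsq : SquareFree S) (hv : v ∈ S)
    (ha : a ∈ steps S v) : #(gaps S v a) ≤ if a.rev ∈ steps S v then 2 else 1 := by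
  set B := insert a (steps S v)ᶜ
  set T := {c ∈ B | v + a.vec + c.vec ∈ S}
  have hB : #B = n + 1 := by
    rw [card_insert_of_notMem (by simpa using ha), card_compl_steps (hdeg v hv)]
  have hsplit : #T + #(gaps S v a) = n + 1 := hB ▸ card_filter_add_card_filter_not _
  have hsub : steps S (v + a.vec) ⊆ insert a.rev T := by
    intro c hc
    rw [mem_steps] at hc
    rw [mem_insert, mem_filter]
    by_cases hcD : c ∈ steps S v
    · by_cases hca : c.1 = a.1
      · rcases Dir.eq_or_eq_rev_of_fst_eq hca with rfl | rfl
        · exact .inr ⟨mem_insert_self _ _, hc⟩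
        · exact .inl rfl
      · exact absurd hc (hsq (Ne.symm hca) hv (mem_steps.mp ha) (mem_steps.mp hcD))
    · exact .inr ⟨mem_insert_of_mem (mem_compl.mpr hcD), hc⟩
  have hcard := card_le_card hsub
  rw [hdeg _ (mem_steps.mp ha)] at hcard
  split_ifs with hra
  · have := card_insert_le a.rev T
    omega
  · have hraT : a.rev ∈ T :=
      mem_filter.mpr ⟨mem_insert_of_mem (mem_compl.mpr hra), by simpa using hv⟩
    rw [insert_eq_of_mem hraT] at hcard
    omega

lemma steps_subset_of_mem_witnesses (hsq : SquareFree S) (hhex : HexagonFree S) (hv : v ∈ S)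
    (hb : b ∉ steps S v) (ha : a ∈ witnesses S v b) :
    steps S (v + a.vec + b.vec) ⊆
      insert b.rev (insert b ((misses S v b).erase a.rev ∪ (gaps S v a).erase b.rev)) := by
  obtain ⟨haD, hab, hw⟩ := mem_witnesses.mp ha
  have hab₁ : a.1 ≠ b.1 := fun h =>
    (Dir.eq_or_eq_rev_of_fst_eq h).elim (fun h => hb (h ▸ haD)) hab
  intro c hc
  rw [mem_steps] at hc
  simp only [mem_insert, mem_union, mem_erase, mem_misses, mem_gaps]
  by_cases hcb : c.1 = b.1
  · rcases Dir.eq_or_eq_rev_of_fst_eq hcb with rfl | rfl <;> simp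
  by_cases hca : c.1 = a.1
  · rcases Dir.eq_or_eq_rev_of_fst_eq hca with rfl | rfl
    · exact .inr <| .inr <| .inr ⟨hab, .inl rfl,
        fun h => hsq (Ne.symm hab₁) (mem_steps.mp haD) hw h hc⟩
    · rw [add_right_comm (v + a.vec), Dir.add_vec_add_vec_rev] at hc
      exact absurd (mem_steps.mpr hc) hb
  have hca' : c ≠ a.rev := by rintro rfl; exact hca rfl
  have hcb' : c ≠ b.rev := by rintro rfl; exact hcb rfl
  by_cases hcD : c ∈ steps S v
  · exact .inr <| .inr <| .inl ⟨hca', hcD, hcb', hhex hab₁ (Ne.symm hca) (Ne.symm hcb) hv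
      (mem_steps.mp haD) hw hc (mem_steps.mp hcD)⟩
  · exact .inr <| .inr <| .inr ⟨hcb', .inr hcD,
      fun h => hsq (Ne.symm hcb) (mem_steps.mp haD) hw h hc⟩

lemma le_card_misses_add_card_gaps (hdeg : ∀ x ∈ S, #(steps S x) = n) (hsq : SquareFree S)
    (hhex : HexagonFree S) (hv : v ∈ S) (hb : b ∉ steps S v) (ha : a ∈ witnesses S v b) :
    n ≤ #((misses S v b).erase a.rev) + #((gaps S v a).erase b.rev) + 2 := by
  have hcard := card_le_card (steps_subset_of_mem_witnesses hsq hhex hv hb ha)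
  rw [hdeg _ (mem_witnesses.mp ha).2.2] at hcard
  have := card_insert_le b.rev (insert b ((misses S v b).erase a.rev ∪ (gaps S v a).erase b.rev))
  have := card_insert_le b ((misses S v b).erase a.rev ∪ (gaps S v a).erase b.rev)
  have := card_union_le ((misses S v b).erase a.rev) ((gaps S v a).erase b.rev)
  omega

lemma le_card_misses_add_four (hdeg : ∀ x ∈ S, #(steps S x) = n) (hsq : SquareFree S)
    (hhex : HexagonFree S) (hv : v ∈ S) (hb : b ∉ steps S v) : n ≤ #(misses S v b) + 4 := by
  rcases (witnesses S v b).eq_empty_or_nonempty with hw | ⟨a, ha⟩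
  · have h := card_witnesses_add_card_misses S v b
    have := pred_card_le_card_erase (s := steps S v) (a := b.rev)
    rw [hw, card_empty] at h
    rw [hdeg v hv] at this
    omega
  · have := le_card_misses_add_card_gaps hdeg hsq hhex hv hb ha
    have := card_erase_le (s := misses S v b) (a := a.rev)
    have := card_erase_le (s := gaps S v a) (a := b.rev)
    have := card_gaps_le hdeg hsq hv (mem_witnesses.mp ha).1
    split_ifs at this <;> omega

lemma sum_card_misses_le_sum_card_gaps :
    ∑ b ∈ (steps S v)ᶜ, #(misses S v b) ≤ ∑ a ∈ steps S v, #(gaps S v a) := by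
  set D := steps S v
  have hmisses (b : Dir n) : D.bipartiteAbove (fun b a => a ∈ misses S v b) b = misses S v b := by
    rw [bipartiteAbove, filter_mem_eq_inter, inter_eq_right]
    exact fun a ha => (mem_misses.mp ha).1
  calc ∑ b ∈ Dᶜ, #(misses S v b)
      = ∑ b ∈ Dᶜ, #(D.bipartiteAbove (fun b a => a ∈ misses S v b) b) := by simp only [hmisses]
    _ = ∑ a ∈ D, #(Dᶜ.bipartiteBelow (fun b a => a ∈ misses S v b) a) :=
        sum_card_bipartiteAbove_eq_sum_card_bipartiteBelow _
    _ ≤ ∑ a ∈ D, #(gaps S v a) := by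
        refine sum_le_sum fun a _ => card_le_card fun b hb => ?_
        simp only [mem_bipartiteBelow, mem_compl, mem_misses] at hb
        exact mem_gaps.mpr ⟨.inr hb.1, hb.2.2.2⟩

lemma sum_card_misses_le (hdeg : ∀ x ∈ S, #(steps S x) = n) (hsq : SquareFree S) (hv : v ∈ S) :
    ∑ b ∈ (steps S v)ᶜ, #(misses S v b) ≤ n + #{a ∈ steps S v | a.rev ∈ steps S v} := by
  calc ∑ b ∈ (steps S v)ᶜ, #(misses S v b)
      ≤ ∑ a ∈ steps S v, #(gaps S v a) := sum_card_misses_le_sum_card_gaps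
    _ ≤ ∑ a ∈ steps S v, (1 + if a.rev ∈ steps S v then 1 else 0) := by
        refine sum_le_sum fun a ha => ?_
        have := card_gaps_le hdeg hsq hv ha
        split_ifs at this ⊢ <;> omega
    _ = n + #{a ∈ steps S v | a.rev ∈ steps S v} := by
        rw [sum_add_distrib, card_filter, sum_const, smul_eq_mul, mul_one, hdeg v hv]

lemma rev_mem_witnesses (hdeg : ∀ x ∈ S, #(steps S x) = n) (hsq : SquareFree S)
    (hhex : HexagonFree S) (hv : v ∈ S) (hb : b ∉ steps S v) (hm : #(misses S v b) + 4 ≤ n)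
    (ha : a ∈ witnesses S v b) : a.rev ∈ witnesses S v b := by
  obtain ⟨haD, -, -⟩ := mem_witnesses.mp ha
  have hbound := le_card_misses_add_card_gaps hdeg hsq hhex hv hb ha
  have hgaps := card_gaps_le hdeg hsq hv haD
  have := card_erase_le (s := misses S v b) (a := a.rev)
  have := card_erase_le (s := gaps S v a) (a := b.rev)
  have hrD : a.rev ∈ steps S v := by
    by_contra h
    rw [if_neg h] at hgaps
    omega
  rw [if_pos hrD] at hgaps
  have hrm : a.rev ∉ misses S v b := fun h => by
    have := card_erase_add_one h
    omega
  have hrb : a.rev ≠ b.rev := fun h => hb (Dir.rev_injective h ▸ haD)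
  simp only [mem_misses, not_and, not_not] at hrm
  exact mem_witnesses.mpr ⟨hrD, hrb, hrm hrD hrb⟩

lemma mem_witnesses_rev (hdeg : ∀ x ∈ S, #(steps S x) = n) (hsq : SquareFree S)
    (hhex : HexagonFree S) (hv : v ∈ S) (hb : b ∉ steps S v) (hbr : b.rev ∉ steps S v)
    (hm : #(misses S v b) + 4 ≤ n) (ha : a ∈ witnesses S v b) : a ∈ witnesses S v b.rev := by
  obtain ⟨haD, -, -⟩ := mem_witnesses.mp ha
  have hbound := le_card_misses_add_card_gaps hdeg hsq hhex hv hb ha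
  have hgaps := card_gaps_le hdeg hsq hv haD
  have := card_erase_le (s := misses S v b) (a := a.rev)
  have hrg : b.rev ∉ gaps S v a := fun h => by
    have := card_erase_add_one h
    split_ifs at hgaps <;> omega
  have hab : a ≠ b.rev.rev := by
    rw [Dir.rev_rev]
    rintro rfl
    exact hb haD
  simp only [mem_gaps, hbr, not_false_eq_true, or_true, true_and, not_not] at hrg
  exact mem_witnesses.mpr ⟨haD, hab, hrg⟩

lemma witnesses_rev_eq (hdeg : ∀ x ∈ S, #(steps S x) = n) (hsq : SquareFree S)
    (hhex : HexagonFree S) (hv : v ∈ S) (h5 : n = 5) (hb : b ∉ steps S v)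
    (hbr : b.rev ∉ steps S v) (hm : #(misses S v b) ≤ 1) :
    witnesses S v b.rev = witnesses S v b := by
  have hsub : witnesses S v b ⊆ witnesses S v b.rev := fun a ha =>
    mem_witnesses_rev hdeg hsq hhex hv hb hbr (by omega) ha
  have hcount := card_witnesses_add_card_misses S v b
  have hcount' := card_witnesses_add_card_misses S v b.rev
  rw [erase_eq_of_notMem hbr, hdeg v hv] at hcount
  rw [Dir.rev_rev, erase_eq_of_notMem hb, hdeg v hv] at hcount'
  have := card_le_card hsub
  obtain ⟨k, hk⟩ := Dir.even_card_of_rev_mem fun a ha =>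
    rev_mem_witnesses hdeg hsq hhex hv hbr (by omega) ha
  exact (eq_of_subset_of_card_le hsub (by omega)).symm

lemma rev_not_mem_steps_of_misses_eq_singleton (hdeg : ∀ x ∈ S, #(steps S x) = n)
    (hsq : SquareFree S) (hhex : HexagonFree S) (hv : v ∈ S) (hb : b ∉ steps S v)
    (hm : #(misses S v b) + 4 ≤ n) (hc : misses S v b = {c}) : c.rev ∉ steps S v := by
  intro hcr
  obtain ⟨hcD, -, hcb⟩ := mem_misses.mp (hc ▸ mem_singleton_self c)
  have hcrb : c.rev ≠ b.rev := fun h => hb (Dir.rev_injective h ▸ hcD)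
  have hcrw : c.rev ∈ witnesses S v b := by
    refine mem_witnesses.mpr ⟨hcr, hcrb, not_not.mp fun h => ?_⟩
    have : c.rev ∈ misses S v b := mem_misses.mpr ⟨hcr, hcrb, h⟩
    rw [hc, mem_singleton] at this
    exact c.rev_ne_self this
  have := rev_mem_witnesses hdeg hsq hhex hv hb hm hcrw
  exact hcb (by simpa using (mem_witnesses.mp this).2.2)

lemma two_le_card_misses (hdeg : ∀ x ∈ S, #(steps S x) = n) (hsq : SquareFree S)
    (hhex : HexagonFree S) (hv : v ∈ S) (h5 : n = 5) (hb : b ∉ steps S v) :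
    2 ≤ #(misses S v b) := by
  by_contra! hm
  have hm1 : #(misses S v b) = 1 := by
    have := le_card_misses_add_four hdeg hsq hhex hv hb
    omega
  have hclosed : ∀ a ∈ witnesses S v b, a.rev ∈ witnesses S v b := fun a ha =>
    rev_mem_witnesses hdeg hsq hhex hv hb (by omega) ha
  have hcount := card_witnesses_add_card_misses S v b
  by_cases hbr : b.rev ∈ steps S v
  · obtain ⟨k, hk⟩ := Dir.even_card_of_rev_mem hclosed
    rw [card_erase_of_mem hbr, hdeg v hv] at hcount
    omega
  obtain ⟨c, hc⟩ := card_eq_one.mp hm1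
  obtain ⟨hcD, -, hcb⟩ := mem_misses.mp (hc ▸ mem_singleton_self c)
  have hcbr : v + c.vec + b.rev.vec ∉ S := fun h => by
    have hcw : c ∈ witnesses S v b.rev :=
      mem_witnesses.mpr ⟨hcD, by rw [Dir.rev_rev]; rintro rfl; exact hb hcD, h⟩
    rw [witnesses_rev_eq hdeg hsq hhex hv h5 hb hbr (by omega)] at hcw
    exact hcb (mem_witnesses.mp hcw).2.2
  have hcr := rev_not_mem_steps_of_misses_eq_singleton hdeg hsq hhex hv hb (by omega) hc
  have hgaps := card_gaps_le hdeg hsq hv hcD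
  rw [if_neg hcr] at hgaps
  have hpair : {b, b.rev} ⊆ gaps S v c := by
    intro d hd
    rcases mem_insert.mp hd with rfl | hd
    · exact mem_gaps.mpr ⟨.inr hb, hcb⟩
    · rw [mem_singleton.mp hd]
      exact mem_gaps.mpr ⟨.inr hbr, hcbr⟩
  have := card_le_card hpair
  rw [card_pair (Dir.rev_ne_self b).symm] at this
  omega

lemma mul_le_sum_card_misses {m : ℕ} (hdeg : ∀ x ∈ S, #(steps S x) = n) (hv : v ∈ S)
    (hm : ∀ b ∉ steps S v, m ≤ #(misses S v b)) :
    n * m ≤ ∑ b ∈ (steps S v)ᶜ, #(misses S v b) := by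
  have := card_nsmul_le_sum _ _ m fun b hb => hm b (mem_compl.mp hb)
  rwa [card_compl_steps (hdeg v hv), smul_eq_mul] at this

end Counting

end Grid

theorem regular_n_girth_le_six (n : ℕ) (hn : n = 5 ∨ 7 ≤ n)
    (S : Set (Fin n → ℤ)) (hS : S.Nonempty) (hreg : IsRegularInduced n S n) :
    ((grid n).induce S).egirth ≤ 6 := by
  by_contra! hgirth
  obtain ⟨v, hv⟩ := hS
  have hdeg : ∀ x ∈ S, #(Grid.steps S x) = n := fun x hx => Grid.card_steps hreg hx
  have hsq := Grid.squareFree_of_four_lt_egirth (lt_of_le_of_lt (by norm_num) hgirth)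
  have hhex := Grid.hexagonFree_of_six_lt_egirth hgirth
  have hupper := Grid.sum_card_misses_le hdeg hsq hv
  have hpairs := card_filter_le (Grid.steps S v) (fun a => a.rev ∈ Grid.steps S v)
  rw [hdeg v hv] at hpairs
  rcases hn with h5 | h7
  · have := Grid.mul_le_sum_card_misses hdeg hv fun b hb =>
      Grid.two_le_card_misses hdeg hsq hhex hv h5 hb
    obtain ⟨k, hk⟩ := Grid.Dir.even_card_filter_rev_mem (Grid.steps S v)
    omega
  · have := Grid.mul_le_sum_card_misses (m := 3) hdeg hv fun b hb => by
      have := Grid.le_card_misses_add_four hdeg hsq hhex hv hb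
      omega
    omega
end

section
/- Let k ≥ 3 and n ≥ 2 be integers, let α be a positive real number such that (k − 1)^α > e·(2α + 1), and let r be a positive integer with r > α·n. Then the number of points x = (x_1, …, x_n) ∈ ℤ^n with |x_1| + ⋯ + |x_n| ≤ r is strictly less than (k·(k − 1)^r − 2)/(k − 2). -/
/-!
The zigzag bijection `ℤ ≃ ℕ` at most doubles absolute values, so applied coordinatewise it embeds
the grid ball of radius `r` into the tuples in `ℕⁿ` of sum at most `2r`; by stars and bars there
are at most `C(n + 2r, n) ≤ (e (n + 2r) / n)ⁿ` of them. With `t = r / n > α`, the hypothesis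
`e (2α + 1) < (k - 1)^α` propagates to `e (2t + 1) ≤ (k - 1)^t`, so the grid ball has at most
`(k - 1)^r` points, fewer than the tree ball.
-/

open Finset Real Nat

lemma Equiv.intEquivNat_le_two_mul_abs (z : ℤ) : (Equiv.intEquivNat z : ℤ) ≤ 2 * |z| := by
  cases z with
  | ofNat m =>
    change ((2 * m : ℕ) : ℤ) ≤ 2 * |(m : ℤ)|
    simp
  | negSucc m =>
    change ((2 * m + 1 : ℕ) : ℤ) ≤ 2 * |Int.negSucc m|
    rw [Int.negSucc_eq, abs_neg, abs_of_nonneg (by positivity)]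
    omega

lemma encard_setOf_sum_le_le_choose (n m : ℕ) :
    {y : Fin n → ℕ | ∑ i, y i ≤ m}.encard ≤ (n + m).choose n := by
  -- stars and bars: a slack coordinate `m - ∑ i, y i` turns `y` into a composition of `m`
  let slack (y : Fin n → ℕ) : Fin (n + 1) →₀ ℕ :=
    Finsupp.equivFunOnFinite.symm (Fin.cons (m - ∑ i, y i) y)
  calc {y : Fin n → ℕ | ∑ i, y i ≤ m}.encard
      ≤ ((univ : Finset (Fin (n + 1))).finsuppAntidiag m : Set (Fin (n + 1) →₀ ℕ)).encard := by
        refine Set.encard_le_encard_of_injOn (f := slack) (fun y hy => ?_) fun y _ z _ h => ?_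
        · simp [slack, mem_finsuppAntidiag, Fin.sum_univ_succ, Nat.sub_add_cancel hy]
        · exact (Fin.cons_injective2 (Finsupp.equivFunOnFinite.symm.injective h)).2
    _ = (n + m).choose n := by
        rw [Set.encard_coe_eq_coe_finsetCard, card_finsuppAntidiag_nat_eq_choose,
          Nat.choose_symm_add]
        simp [Nat.add_right_comm n 1 m]

lemma ncard_setOf_sum_abs_le_le_choose (n r : ℕ) :
    {x : Fin n → ℤ | ∑ i, |x i| ≤ (r : ℤ)}.ncard ≤ (n + 2 * r).choose n := by
  have hencard : {x : Fin n → ℤ | ∑ i, |x i| ≤ (r : ℤ)}.encard ≤ (n + 2 * r).choose n := by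
    refine le_trans (Set.encard_le_encard_of_injOn (t := {y | ∑ i, y i ≤ 2 * r})
      (f := (Equiv.intEquivNat ∘ ·)) (fun x hx => ?_)
      (Equiv.intEquivNat.injective.comp_left.injOn)) (encard_setOf_sum_le_le_choose n (2 * r))
    have hx : ∑ i, |x i| ≤ (r : ℤ) := hx
    have : ((∑ i, Equiv.intEquivNat (x i) : ℕ) : ℤ) ≤ 2 * r := by
      push_cast
      calc ∑ i, (Equiv.intEquivNat (x i) : ℤ) ≤ ∑ i, 2 * |x i| :=
            sum_le_sum fun i _ => Equiv.intEquivNat_le_two_mul_abs (x i)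
        _ ≤ 2 * r := by rw [← mul_sum]; omega
    exact_mod_cast this
  exact (Set.encard_le_coe_iff_finite_ncard_le.1 hencard).2

lemma Nat.choose_le_exp_one_mul_div_pow (N n : ℕ) : (N.choose n : ℝ) ≤ (exp 1 * N / n) ^ n := by
  rcases n.eq_zero_or_pos with rfl | hn
  · simp
  calc (N.choose n : ℝ) ≤ N ^ n / n ! := Nat.choose_le_pow_div n N
    _ = (N / n) ^ n * (n ^ n / n !) := by
        rw [← mul_div_assoc, ← mul_pow, div_mul_cancel₀ _ (by positivity)]
    _ ≤ (N / n) ^ n * exp n := by gcongr; exact pow_div_factorial_le_exp _ (by positivity) n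
    _ = (exp 1 * N / n) ^ n := by rw [← exp_one_pow]; ring

lemma exp_one_mul_two_mul_add_one_le_rpow {K α t : ℝ} (hK : 0 ≤ K) (hα : 0 < α) (hαt : α ≤ t)
    (h : exp 1 * (2 * α + 1) ≤ K ^ α) : exp 1 * (2 * t + 1) ≤ K ^ t := by
  set s := t / α
  have hs : 1 ≤ s := (one_le_div hα).2 hαt
  have ht : t = α * s := (mul_div_cancel₀ t hα.ne').symm
  calc exp 1 * (2 * t + 1) ≤ exp 1 * s * (2 * α + 1) := by rw [ht]; nlinarith [exp_pos 1]
    _ ≤ exp s * (2 * α + 1) ^ s := by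
        gcongr
        · -- `e * s ≤ exp s` since `s ≤ exp (s - 1)`
          simpa [← exp_add] using mul_le_mul_of_nonneg_left (add_one_le_exp (s - 1)) (exp_pos 1).le
        · simpa using rpow_le_rpow_of_exponent_le (by linarith : 1 ≤ 2 * α + 1) hs
    _ = (exp 1 * (2 * α + 1)) ^ s := by rw [mul_rpow (exp_pos 1).le (by linarith), exp_one_rpow]
    _ ≤ (K ^ α) ^ s := by gcongr
    _ = K ^ t := by rw [← rpow_mul hK, ← ht]

lemma choose_add_two_mul_le_pow {K α : ℝ} {n r : ℕ} (hK : 1 ≤ K) (hα : 0 < α)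
    (hαr : α * n ≤ r) (h : exp 1 * (2 * α + 1) ≤ K ^ α) : ((n + 2 * r).choose n : ℝ) ≤ K ^ r := by
  rcases n.eq_zero_or_pos with rfl | hn
  · simpa using one_le_pow₀ hK
  have hn' : (0 : ℝ) < n := by exact_mod_cast hn
  have hr : ((n : ℝ) + 2 * r) / n = 2 * (r / n) + 1 := by field_simp; ring
  calc ((n + 2 * r).choose n : ℝ) ≤ (exp 1 * (2 * (r / n) + 1)) ^ n := by
        simpa [mul_div_assoc, hr] using Nat.choose_le_exp_one_mul_div_pow (n + 2 * r) n
    _ ≤ (K ^ ((r : ℝ) / n)) ^ n := by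
        gcongr
        exact exp_one_mul_two_mul_add_one_le_rpow (by linarith) hα ((le_div_iff₀ hn').2 hαr) h
    _ = K ^ r := by rw [← rpow_mul_natCast (by linarith), div_mul_cancel₀ _ hn'.ne', rpow_natCast]

theorem tree_ball_gt_grid_ball_general (k n r : ℕ) (hk : 3 ≤ k) (α : ℝ) (hα : 0 < α)
    (hαk : ((k : ℝ) - 1) ^ α > Real.exp 1 * (2 * α + 1))
    (hrα : α * n < (r : ℝ)) :
    ({x : Fin n → ℤ | ∑ i, |x i| ≤ (r : ℤ)}.ncard : ℝ)
      < ((k : ℝ) * ((k : ℝ) - 1) ^ r - 2) / ((k : ℝ) - 2) := by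
  have hk' : (3 : ℝ) ≤ k := by exact_mod_cast hk
  have hr : 0 < r := by exact_mod_cast (by positivity : 0 ≤ α * n).trans_lt hrα
  have hpow : 1 < ((k : ℝ) - 1) ^ r := one_lt_pow₀ (by linarith) hr.ne'
  calc ({x : Fin n → ℤ | ∑ i, |x i| ≤ (r : ℤ)}.ncard : ℝ) ≤ (n + 2 * r).choose n := by
        exact_mod_cast ncard_setOf_sum_abs_le_le_choose n r
    _ ≤ ((k : ℝ) - 1) ^ r := choose_add_two_mul_le_pow (by linarith) hα hrα.le hαk.le
    _ < ((k : ℝ) * ((k : ℝ) - 1) ^ r - 2) / ((k : ℝ) - 2) := by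
        rw [lt_div_iff₀ (by linarith)]
        linarith

theorem tree_ball_gt_grid_ball (k n r : ℕ) (hk : 3 ≤ k) (hn : 2 ≤ n) (α : ℝ) (hα : 0 < α)
    (hαk : ((k : ℝ) - 1) ^ α > Real.exp 1 * (2 * α + 1))
    (hr : 0 < r) (hrα : α * n < (r : ℝ)) :
    ({x : Fin n → ℤ | ∑ i, |x i| ≤ (r : ℤ)}.ncard : ℝ)
      < ((k : ℝ) * ((k : ℝ) - 1) ^ r - 2) / ((k : ℝ) - 2) :=
  tree_ball_gt_grid_ball_general k n r hk α hα hαk hrα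
end

section
/- For all integers n ≥ 1 and r ≥ 0, the number of points x = (x_1, …, x_n) ∈ ℤ^n with |x_1| + ⋯ + |x_n| ≤ r is at most (2r + n)^n / n!. -/
theorem grid_ball_le_octahedron_volume (n r : ℕ) (hn : 1 ≤ n) :
    ({x : Fin n → ℤ | ∑ i, |x i| ≤ (r : ℤ)}.ncard : ℝ)
      ≤ (2 * (r : ℝ) + n) ^ n / (Nat.factorial n : ℝ) := by
  classical
  set S : Set (Fin n → ℤ) := {x | ∑ i, |x i| ≤ (r : ℤ)} with hS
  set c : ℤ → ℕ := fun k => if 0 ≤ k then 2 * k.natAbs else 2 * k.natAbs - 1 with hc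
  have hcinj : Function.Injective c := by
    intro k l h
    simp only [hc] at h
    split_ifs at h <;> omega
  have hcle : ∀ k : ℤ, c k ≤ 2 * k.natAbs := by
    intro k; simp only [hc]; split_ifs <;> omega
  set a : (Fin n → ℤ) → Fin n → ℕ :=
    fun x i => i.val + 2 * ∑ j ∈ Finset.Iio i, (x j).natAbs + c (x i) with ha
  have hmono : ∀ x : Fin n → ℤ, StrictMono (a x) := by
    intro x i j hij
    simp only [ha]
    have hsub : insert i (Finset.Iio i) ⊆ Finset.Iio j := by
      intro k hk
      rcases Finset.mem_insert.mp hk with rfl | hk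
      · exact Finset.mem_Iio.mpr hij
      · exact Finset.mem_Iio.mpr ((Finset.mem_Iio.mp hk).trans hij)
    have h1 : ∑ k ∈ insert i (Finset.Iio i), (x k).natAbs
        ≤ ∑ k ∈ Finset.Iio j, (x k).natAbs := Finset.sum_le_sum_of_subset hsub
    rw [Finset.sum_insert (by simp)] at h1
    have h2 := hcle (x i)
    have h3 : i.val < j.val := hij
    omega
  have hbound : ∀ x ∈ S, ∀ i : Fin n, a x i < n + 2 * r := by
    intro x hx i
    have hcast : ((∑ i, (x i).natAbs : ℕ) : ℤ) = ∑ i, |x i| := by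
      push_cast [Int.natCast_natAbs]
      rfl
    have hr : ∑ i, (x i).natAbs ≤ r := by
      have := hx
      rw [hS, Set.mem_setOf_eq] at this
      exact_mod_cast hcast ▸ this
    have hsub : insert i (Finset.Iio i) ⊆ Finset.univ := Finset.subset_univ _
    have h1 : ∑ k ∈ insert i (Finset.Iio i), (x k).natAbs
        ≤ ∑ k, (x k).natAbs := Finset.sum_le_sum_of_subset hsub
    rw [Finset.sum_insert (by simp)] at h1
    have h2 := hcle (x i)
    have h3 : i.val < n := i.isLt
    simp only [ha]
    omega
  have hainj : ∀ x y : Fin n → ℤ, a x = a y → x = y := by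
    intro x y h
    have key : ∀ m : ℕ, ∀ hm : m < n, x ⟨m, hm⟩ = y ⟨m, hm⟩ := by
      intro m
      induction m using Nat.strong_induction_on with
      | _ m ih =>
        intro hm
        have hsum : ∑ j ∈ Finset.Iio (⟨m, hm⟩ : Fin n), (x j).natAbs
            = ∑ j ∈ Finset.Iio (⟨m, hm⟩ : Fin n), (y j).natAbs := by
          apply Finset.sum_congr rfl
          intro j hj
          have hjm : j.val < m := by simpa [Fin.lt_def] using Finset.mem_Iio.mp hj
          have : x j = y j := by
            have := ih j.val hjm j.isLt
            simpa using this
          rw [this]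
        have heq : a x ⟨m, hm⟩ = a y ⟨m, hm⟩ := by rw [h]
        simp only [ha] at heq
        have hceq : c (x ⟨m, hm⟩) = c (y ⟨m, hm⟩) := by omega
        exact hcinj hceq
    funext i
    have := key i.val i.isLt
    simpa using this
  -- the injection into n-element subsets of range (n + 2r)
  set T := Finset.powersetCard n (Finset.range (n + 2 * r)) with hT
  have hmem : ∀ x ∈ S, Finset.image (a x) Finset.univ ∈ T := by
    intro x hx
    rw [hT, Finset.mem_powersetCard]
    constructor
    · intro t ht
      rcases Finset.mem_image.mp ht with ⟨i, _, rfl⟩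
      exact Finset.mem_range.mpr (hbound x hx i)
    · rw [Finset.card_image_of_injective _ (hmono x).injective, Finset.card_univ,
        Fintype.card_fin]
  have hcardim : ∀ x : Fin n → ℤ, (Finset.image (a x) Finset.univ).card = n := by
    intro x
    rw [Finset.card_image_of_injective _ (hmono x).injective, Finset.card_univ,
      Fintype.card_fin]
  let F : S → {t // t ∈ T} := fun x => ⟨Finset.image (a x.1) Finset.univ, hmem x.1 x.2⟩
  have hFinj : Function.Injective F := by
    rintro ⟨x, hx⟩ ⟨y, hy⟩ hxy
    simp only [F, Subtype.mk.injEq] at hxy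
    have h1 : a x = ⇑((Finset.image (a x) Finset.univ).orderEmbOfFin (hcardim x)) :=
      Finset.orderEmbOfFin_unique (hcardim x)
        (fun i => Finset.mem_image_of_mem _ (Finset.mem_univ i)) (hmono x)
    have h2 : a y = ⇑((Finset.image (a x) Finset.univ).orderEmbOfFin (hcardim x)) := by
      apply Finset.orderEmbOfFin_unique
      · intro i
        rw [hxy]
        exact Finset.mem_image_of_mem _ (Finset.mem_univ i)
      · exact hmono y
    exact Subtype.ext (hainj x y (h1.trans h2.symm))
  have hle : S.ncard ≤ (n + 2 * r).choose n := by
    rw [← Nat.card_coe_set_eq]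
    calc Nat.card S ≤ Nat.card {t // t ∈ T} := Nat.card_le_card_of_injective F hFinj
      _ = T.card := by rw [Nat.card_eq_fintype_card, Fintype.card_coe]
      _ = (n + 2 * r).choose n := by
          rw [hT, Finset.card_powersetCard, Finset.card_range]
  have hnat : (n + 2 * r).choose n * n.factorial ≤ (n + 2 * r) ^ n := by
    calc (n + 2 * r).choose n * n.factorial = (n + 2 * r).descFactorial n := by
          rw [Nat.descFactorial_eq_factorial_mul_choose]; ring
      _ ≤ (n + 2 * r) ^ n := Nat.descFactorial_le_pow _ _
  have hfac : (0 : ℝ) < (n.factorial : ℝ) := by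
    exact_mod_cast n.factorial_pos
  calc (S.ncard : ℝ) ≤ ((n + 2 * r).choose n : ℝ) := by exact_mod_cast hle
    _ ≤ (2 * (r : ℝ) + n) ^ n / (Nat.factorial n : ℝ) := by
        rw [le_div_iff₀ hfac]
        calc ((n + 2 * r).choose n : ℝ) * (n.factorial : ℝ)
            = (((n + 2 * r).choose n * n.factorial : ℕ) : ℝ) := by push_cast; ring
          _ ≤ (((n + 2 * r) ^ n : ℕ) : ℝ) := by exact_mod_cast hnat
          _ = (2 * (r : ℝ) + n) ^ n := by push_cast; ring
end

section
/- Every nonempty 3-regular subgraph of the 3-dimensional grid has girth at most 16. -/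
/-!
If the girth exceeded 16, the ball of radius 8 around a vertex `v` would be a tree: in a graph of
minimum degree `k` and girth greater than `2d + 2` the sphere of radius `d + 1` has at least
`k (k - 1)^d` vertices, since two shortest paths to the same vertex would close a short cycle.
Hence at least `1 + 6 + 24 + 96 + 384 = 511` vertices lie at even distance at most 8 from `v`.
A grid walk of length `ℓ` moves by an `ℓ¹`-distance at most `ℓ` and of the same parity, so
`w ↦ v - w` maps these vertices injectively to lattice points of even `ℓ¹`-norm at most 8, of
which there are only 489.
-/

open Finset SimpleGraph

namespace SimpleGraph

variable {V : Type*} {G : SimpleGraph V} {u u' v x : V} {d : ℕ}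

lemma egirth_le_length_add_of_isPath_ne {p q : G.Walk u v} (hp : p.IsPath) (hq : q.IsPath)
    (hpq : p ≠ q) : G.egirth ≤ p.length + q.length := by
  obtain ⟨_, _, _, c, hc, hlen⟩ := hp.exists_isCycle_length_le_add_of_ne hq hpq
  exact (egirth_le_length hc).trans (by exact_mod_cast hlen)

lemma exists_adj_dist_eq_of_dist_eq_succ (hx : G.Reachable v x) (hd : G.dist v x = d + 1) :
    ∃ u, G.Adj u x ∧ G.Reachable v u ∧ G.dist v u = d := by
  obtain ⟨p, hp⟩ := hx.exists_walk_length_eq_dist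
  have hnil : ¬p.Nil := fun h => by simp [h.length_eq_zero] at hp; omega
  have hadj := p.adj_penultimate hnil
  refine ⟨p.penultimate, hadj, ⟨p.dropLast⟩, le_antisymm ?_ ?_⟩
  · simpa [Walk.length_dropLast, hp, hd] using dist_le p.dropLast
  · have := hadj.reachable.dist_triangle_right v
    rw [dist_eq_one_iff_adj.mpr hadj] at this
    omega

lemma eq_of_adj_of_dist_eq_succ (hgirth : ((2 * d + 2 : ℕ) : ℕ∞) < G.egirth)
    (hu : G.Reachable v u) (hu' : G.Reachable v u') (hdu : G.dist v u = d)
    (hdu' : G.dist v u' = d) (hux : G.Adj u x) (hu'x : G.Adj u' x) (hx : G.dist v x = d + 1) :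
    u = u' := by
  by_contra hne
  obtain ⟨p, hp⟩ := hu.exists_walk_length_eq_dist
  obtain ⟨p', hp'⟩ := hu'.exists_walk_length_eq_dist
  have hpath : (p.concat hux).IsPath :=
    Walk.isPath_of_length_eq_dist _ (by rw [Walk.length_concat, hp, hdu, hx])
  have hpath' : (p'.concat hu'x).IsPath :=
    Walk.isPath_of_length_eq_dist _ (by rw [Walk.length_concat, hp', hdu', hx])
  have hdiff : p.concat hux ≠ p'.concat hu'x := fun h => hne <| by
    simpa using congrArg Walk.penultimate h
  have := egirth_le_length_add_of_isPath_ne hpath hpath' hdiff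
  simp only [Walk.length_concat, hp, hp', hdu, hdu'] at this
  exact hgirth.not_ge (this.trans_eq (by push_cast; ring))

lemma dist_ne_of_adj [DecidableEq V] (hgirth : ((2 * d + 1 : ℕ) : ℕ∞) < G.egirth)
    (hu : G.Reachable v u) (hdu : G.dist v u = d) (h : G.Adj u u') : G.dist v u' ≠ d := by
  intro hdu'
  obtain ⟨p, hp⟩ := hu.exists_walk_length_eq_dist
  obtain ⟨p', hp'⟩ := (hu.trans h.reachable).exists_walk_length_eq_dist
  have hnotin : u' ∉ p.support := fun hmem => by
    have := (dist_le (p.takeUntil u' hmem)).trans_lt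
      (Walk.length_takeUntil_lt_length hmem h.ne.symm)
    omega
  have hpath := (p.isPath_of_length_eq_dist hp).concat hnotin h
  have hdiff : p.concat h ≠ p' := fun he => by
    have := congrArg Walk.length he
    rw [Walk.length_concat] at this
    omega
  have := egirth_le_length_add_of_isPath_ne hpath (p'.isPath_of_length_eq_dist hp') hdiff
  simp only [Walk.length_concat, hp, hp', hdu, hdu'] at this
  exact hgirth.not_ge (this.trans_eq (by push_cast; ring))

variable [DecidableEq V] [G.LocallyFinite]

-- Defined by recursion so that it is a finset as soon as `G` is locally finite.
variable (G) in
noncomputable def sphereFinset (v : V) : ℕ → Finset V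
  | 0 => {v}
  | d + 1 => {x ∈ (sphereFinset v d).biUnion (G.neighborFinset ·) | G.dist v x = d + 1}

lemma mem_sphereFinset : x ∈ G.sphereFinset v d ↔ G.Reachable v x ∧ G.dist v x = d := by
  induction d generalizing x with
  | zero =>
    simp only [sphereFinset, mem_singleton]
    exact ⟨fun h => h ▸ ⟨.rfl, dist_self⟩,
      fun ⟨h, h0⟩ => (h.dist_eq_zero_iff.mp h0).symm⟩
  | succ d ih =>
    simp only [sphereFinset, mem_filter, mem_biUnion, mem_neighborFinset, ih]
    constructor
    · rintro ⟨⟨u, ⟨hu, -⟩, hux⟩, hx⟩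
      exact ⟨hu.trans hux.reachable, hx⟩
    · rintro ⟨hx, hd⟩
      obtain ⟨u, hux, hu, hdu⟩ := exists_adj_dist_eq_of_dist_eq_succ hx hd
      exact ⟨⟨u, ⟨hu, hdu⟩, hux⟩, hd⟩

lemma card_sphereFinset_one : #(G.sphereFinset v 1) = G.degree v := by
  rw [← card_neighborFinset_eq_degree]
  congr 1
  ext x
  simp [mem_sphereFinset, and_iff_right_of_imp fun h : G.Adj v x => h.reachable]

lemma degree_sub_one_le_card_filter_dist_eq (hgirth : ((2 * d + 3 : ℕ) : ℕ∞) < G.egirth)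
    (hu : G.Reachable v u) (hdu : G.dist v u = d + 1) :
    G.degree u - 1 ≤ #{x ∈ G.neighborFinset u | G.dist v x = d + 2} := by
  set children := {x ∈ G.neighborFinset u | G.dist v x = d + 2}
  set parents := {x ∈ G.neighborFinset u | G.dist v x = d}
  have hcover : G.neighborFinset u ⊆ children ∪ parents := by
    intro x hx
    have hux := (mem_neighborFinset ..).mp hx
    have hne := dist_ne_of_adj hgirth hu hdu hux
    simp only [children, parents, mem_union, mem_filter, hx, true_and]
    rcases hux.diff_dist_adj (u := v) with h | h | h <;> omega
  have hparents : #parents ≤ 1 := by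
    refine card_le_one.mpr fun y hy y' hy' => ?_
    simp only [parents, mem_filter, mem_neighborFinset] at hy hy'
    exact eq_of_adj_of_dist_eq_succ (hgirth.trans_le' (by norm_cast; omega))
      (hu.trans hy.1.reachable) (hu.trans hy'.1.reachable) hy.2 hy'.2 hy.1.symm hy'.1.symm hdu
  have := (card_le_card hcover).trans (card_union_le children parents)
  rw [card_neighborFinset_eq_degree] at this
  omega

variable {k : ℕ}

lemma mul_card_sphereFinset_le (hgirth : ((2 * d + 4 : ℕ) : ℕ∞) < G.egirth)
    (hk : ∀ u, k ≤ G.degree u) :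
    (k - 1) * #(G.sphereFinset v (d + 1)) ≤ #(G.sphereFinset v (d + 2)) := by
  classical
  have := card_mul_le_card_mul G.Adj (m := k - 1) (n := 1) (s := G.sphereFinset v (d + 1))
    (t := G.sphereFinset v (d + 2)) (fun u hu => ?_) (fun x hx => ?_)
  · linarith
  · rw [mem_sphereFinset] at hu
    refine (Nat.sub_le_sub_right (hk u) 1).trans <|
      (degree_sub_one_le_card_filter_dist_eq (hgirth.trans_le' (by norm_cast; omega))
        hu.1 hu.2).trans (card_le_card fun x hx => ?_)
    simp only [mem_filter, mem_neighborFinset] at hx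
    simp only [mem_bipartiteAbove, mem_sphereFinset]
    exact ⟨⟨hu.1.trans hx.1.reachable, hx.2⟩, hx.1⟩
  · rw [mem_sphereFinset] at hx
    refine card_le_one.mpr fun y hy y' hy' => ?_
    simp only [mem_bipartiteBelow, mem_sphereFinset] at hy hy'
    exact eq_of_adj_of_dist_eq_succ hgirth hy.1.1 hy'.1.1 hy.1.2 hy'.1.2 hy.2 hy'.2 hx.2

lemma mul_pow_le_card_sphereFinset (hgirth : ((2 * d + 2 : ℕ) : ℕ∞) < G.egirth)
    (hk : ∀ u, k ≤ G.degree u) : k * (k - 1) ^ d ≤ #(G.sphereFinset v (d + 1)) := by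
  induction d with
  | zero => simpa [card_sphereFinset_one] using hk v
  | succ d ih =>
    calc k * (k - 1) ^ (d + 1)
        = (k - 1) * (k * (k - 1) ^ d) := by ring
      _ ≤ (k - 1) * #(G.sphereFinset v (d + 1)) :=
          Nat.mul_le_mul_left _ (ih (hgirth.trans_le' (by norm_cast; omega)))
      _ ≤ #(G.sphereFinset v (d + 2)) := mul_card_sphereFinset_le hgirth hk

end SimpleGraph

noncomputable def evenL1Ball (n r : ℕ) : Finset (Fin n → ℤ) :=
  {z ∈ Fintype.piFinset fun _ => Icc (-r : ℤ) r | ∑ i, |z i| ≤ r ∧ Even (∑ i, |z i|)}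

set_option maxRecDepth 40000 in
lemma card_evenL1Ball_three_eight : #(evenL1Ball 3 8) = 489 := by
  decide

namespace grid

variable {n r : ℕ} {x y : Fin n → ℤ}

lemma sum_abs_sub_le_length (p : (grid n).Walk x y) : ∑ i, |x i - y i| ≤ p.length := by
  induction p with
  | nil => simp
  | @cons x y z h p ih =>
    have hxy : ∑ i, |x i - y i| = 1 := h
    calc ∑ i, |x i - z i| ≤ ∑ i, (|x i - y i| + |y i - z i|) :=
          sum_le_sum fun i _ => abs_sub_le _ _ _
      _ ≤ (p.cons h).length := by
          rw [sum_add_distrib, hxy, Walk.length_cons]; push_cast; linarith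

lemma even_length_sub_sum_abs_sub (p : (grid n).Walk x y) :
    Even ((p.length : ℤ) - ∑ i, |x i - y i|) := by
  induction p with
  | nil => simp
  | @cons x y z h p ih =>
    have hxy : ∑ i, |x i - y i| = 1 := h
    have hstep : Even (∑ i, (|x i - y i| + |y i - z i| - |x i - z i|)) :=
      even_sum _ fun i _ => by
        rw [← sub_add_sub_cancel (x i) (y i) (z i)]
        simp only [Int.even_sub, Int.even_add, even_abs]
    rw [sum_sub_distrib, sum_add_distrib, hxy] at hstep
    rw [Walk.length_cons, Nat.cast_succ,
      show ∀ a b c : ℤ, a + 1 - c = (a - b) + (1 + b - c) by intros; ring]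
    exact ih.add hstep

lemma sub_mem_evenL1Ball (p : (grid n).Walk x y) (hr : p.length ≤ r) (he : Even p.length) :
    x - y ∈ evenL1Ball n r := by
  have hle := sum_abs_sub_le_length p
  have hsum : ∑ i, |(x - y) i| ≤ r := by simp only [Pi.sub_apply]; omega
  refine mem_filter.mpr ⟨Fintype.mem_piFinset.mpr fun i => mem_Icc.mpr (abs_le.mp ?_), hsum, ?_⟩
  · exact (single_le_sum (fun j _ => abs_nonneg ((x - y) j)) (mem_univ i)).trans hsum
  · have := even_length_sub_sum_abs_sub p
    simp only [Pi.sub_apply]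
    rw [Int.even_sub] at this
    exact this.mp (by exact_mod_cast he)

lemma sum_card_sphereFinset_le_card_evenL1Ball {H : (grid n).Subgraph}
    [H.coe.LocallyFinite] (v : H.verts) (r : ℕ) :
    ∑ i ∈ range (r + 1), #(H.coe.sphereFinset v (2 * i)) ≤ #(evenL1Ball n (2 * r)) := by
  rw [← card_sigma]
  refine card_le_card_of_injOn (fun w => (v : Fin n → ℤ) - w.2) (fun w hw => ?_)
    (fun w hw w' hw' h => ?_)
  · simp only [coe_sigma, Set.mem_sigma_iff, mem_coe, mem_range, mem_sphereFinset] at hw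
    obtain ⟨p, hp⟩ := hw.2.1.exists_walk_length_eq_dist
    obtain ⟨q, hq⟩ : ∃ q : (grid n).Walk v w.2, q.length = 2 * w.1 :=
      ⟨p.map H.hom, (p.length_map H.hom).trans (hp.trans hw.2.2)⟩
    exact sub_mem_evenL1Ball q (by omega) (hq ▸ even_two_mul _)
  · simp only [coe_sigma, Set.mem_sigma_iff, mem_coe, mem_range, mem_sphereFinset] at hw hw'
    have hsnd : w.2 = w'.2 := Subtype.ext (sub_right_injective h)
    have hfst : w.1 = w'.1 := by have := hw.2.2; rw [hsnd, hw'.2.2] at this; omega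
    exact Sigma.ext hfst (heq_of_eq hsnd)

end grid

theorem dim3_cubic_girth_le_sixteen (H : (grid 3).Subgraph) (hne : H.verts.Nonempty)
    (hreg : ∀ v ∈ H.verts, (H.neighborSet v).ncard = 3) :
    H.coe.egirth ≤ 16 := by
  by_contra! hgirth
  obtain ⟨v, hv⟩ := hne
  have hncard (u : H.verts) : (H.coe.neighborSet u).ncard = 3 := by
    rw [← Nat.card_coe_set_eq, Nat.card_congr (Subgraph.coeNeighborSetEquiv u),
      Nat.card_coe_set_eq, hreg u u.2]
  let _ : H.coe.LocallyFinite := fun u =>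
    (Set.finite_of_ncard_ne_zero (by rw [hncard u]; omega)).fintype
  have hdeg (u : H.verts) : 3 ≤ H.coe.degree u := by
    rw [← card_neighborFinset_eq_degree, neighborFinset_def, ← Set.ncard_eq_toFinset_card',
      hncard]
  have hsphere (d : ℕ) (hd : d ≤ 7) :=
    mul_pow_le_card_sphereFinset (v := ⟨v, hv⟩) (d := d)
      (hgirth.trans_le' (by norm_cast; omega)) hdeg
  have h2 := hsphere 1 (by norm_num)
  have h4 := hsphere 3 (by norm_num)
  have h6 := hsphere 5 (by norm_num)
  have h8 := hsphere 7 (by norm_num)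
  have hball := grid.sum_card_sphereFinset_le_card_evenL1Ball (⟨v, hv⟩ : H.verts) 4
  norm_num [sum_range_succ, sphereFinset, card_evenL1Ball_three_eight] at hball h2 h4 h6 h8
  omega
end
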